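/- arXiv:2508.11319 — 3 statements merged into one kernel-verified Lean document; each statement's English description precedes it below -/
import Mathlib

section
/- Let a, b, c ∈ ℕ be positive integers with gcd(a,b,c) = 1, with b² − 4ac > 0, and with √(b²−4ac) irrational, and let α be a root of ax² − bx + c (both roots are positive real numbers). Then M_α is atomic, A(M_α) = {α^n : n ∈ ℕ₀} is infinite, and S(M_α) = {1}. -/
open Polynomial

/-- `M_α`: the additive submonoid of `ℂ` generated by the nonnegative powers of `α`. -/
def Malpha (α : ℂ) : AddSubmonoid ℂ :=
  AddSubmonoid.closure (Set.range fun n : ℕ => α ^ n)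

/-- The set of atoms of `M_α`: nonzero elements of `M_α` that cannot be written as a sum
of two nonzero elements of `M_α`. -/
def atomsM (α : ℂ) : Set ℂ :=
  {a | a ∈ Malpha α ∧ a ≠ 0 ∧
    ∀ u v : ℂ, u ∈ Malpha α → v ∈ Malpha α → a = u + v → u = 0 ∨ v = 0}

/-- `M_α` is atomic: every nonzero element is a finite sum of atoms. -/
def IsAtomicMalpha (α : ℂ) : Prop :=
  ∀ x ∈ Malpha α, x ≠ 0 →
    ∃ s : Multiset ℂ, (∀ a ∈ s, a ∈ atomsM α) ∧ s.sum = x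

/-- The set of strong atoms of `M_α`: atoms `a` such that for every `n ≥ 1` the only
multiset of atoms summing to `n • a` is the one consisting of `n` copies of `a`. -/
def strongAtomsM (α : ℂ) : Set ℂ :=
  {a | a ∈ atomsM α ∧ ∀ n : ℕ, 0 < n →
    ∀ s : Multiset ℂ, (∀ b ∈ s, b ∈ atomsM α) → s.sum = n • a →
      s = Multiset.replicate n a}

namespace Stmt10Aux

/-- coordinates of `x^n` in the basis `(1, x)` for `x` satisfying `x^2 = r x - s`. -/
def pqSeq (r s : ℚ) : ℕ → ℚ × ℚ
  | 0 => (1, 0)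
  | n + 1 => (-s * (pqSeq r s n).2, (pqSeq r s n).1 + r * (pqSeq r s n).2)

lemma pow_eq_pq (r s : ℚ) (x : ℝ) (hx : x ^ 2 = (r : ℝ) * x - (s : ℝ)) (n : ℕ) :
    x ^ n = ((pqSeq r s n).1 : ℝ) + ((pqSeq r s n).2 : ℝ) * x := by
  induction n with
  | zero => simp [pqSeq]
  | succ n ih =>
    rw [pow_succ, ih]
    show _ = ((pqSeq r s (n + 1)).1 : ℝ) + ((pqSeq r s (n + 1)).2 : ℝ) * x
    simp only [pqSeq]
    push_cast
    linear_combination ((pqSeq r s n).2 : ℝ) * hx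

lemma sum_pow_coords (r s : ℚ) (x : ℝ) (hx : x ^ 2 = (r : ℝ) * x - (s : ℝ)) (T : Multiset ℕ) :
    (T.map fun j => x ^ j).sum
      = (((T.map fun j => (pqSeq r s j).1).sum : ℚ) : ℝ)
        + (((T.map fun j => (pqSeq r s j).2).sum : ℚ) : ℝ) * x := by
  induction T using Multiset.induction with
  | empty => simp
  | cons j T ih =>
    simp only [Multiset.map_cons, Multiset.sum_cons, ih, pow_eq_pq r s x hx j]
    push_cast
    ring

lemma rat_coords {α : ℝ} (hα : Irrational α) {u v u' v' : ℚ}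
    (h : (u : ℝ) + (v : ℝ) * α = (u' : ℝ) + (v' : ℝ) * α) : u = u' ∧ v = v' := by
  by_cases hv : v = v'
  · subst hv
    have h2 : (u : ℝ) = (u' : ℝ) := by linarith
    exact ⟨by exact_mod_cast h2, rfl⟩
  · exfalso
    apply hα
    refine ⟨(u - u') / (v' - v), ?_⟩
    have hvv : ((v' : ℝ) - (v : ℝ)) ≠ 0 := by
      intro h0
      apply hv
      have : (v : ℝ) = (v' : ℝ) := by linarith
      exact_mod_cast this
    push_cast
    field_simp
    linear_combination h

lemma no_rep_hi {γ δ : ℝ} (hδ : 0 < δ) (hδγ : δ < γ) {T : Multiset ℕ} {k : ℕ}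
    (hT : T ≠ 0) (hall : ∀ j ∈ T, k < j)
    (hγs : (T.map fun j => γ ^ j).sum = γ ^ k)
    (hδs : (T.map fun j => δ ^ j).sum = δ ^ k) : False := by
  have hγ0 : 0 < γ := hδ.trans hδγ
  have key : (T.map fun j => γ ^ k * δ ^ j).sum < (T.map fun j => δ ^ k * γ ^ j).sum := by
    apply Multiset.sum_lt_sum_of_nonempty hT
    intro j hj
    have hkj := hall j hj
    obtain ⟨d, rfl⟩ : ∃ d, j = k + (d + 1) := ⟨j - k - 1, by omega⟩
    have h1 : δ ^ (d + 1) < γ ^ (d + 1) := pow_lt_pow_left₀ hδγ hδ.le (Nat.succ_ne_zero d)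
    have h2 : (0 : ℝ) < γ ^ k * δ ^ k := by positivity
    calc γ ^ k * δ ^ (k + (d + 1)) = (γ ^ k * δ ^ k) * δ ^ (d + 1) := by rw [pow_add]; ring
      _ < (γ ^ k * δ ^ k) * γ ^ (d + 1) := mul_lt_mul_of_pos_left h1 h2
      _ = δ ^ k * γ ^ (k + (d + 1)) := by rw [pow_add]; ring
  rw [Multiset.sum_map_mul_left, Multiset.sum_map_mul_left, hγs, hδs] at key
  nlinarith [key]

lemma no_rep_lo {γ δ : ℝ} (hδ : 0 < δ) (hδγ : δ < γ) {T : Multiset ℕ} {k : ℕ}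
    (hT : T ≠ 0) (hall : ∀ j ∈ T, j < k)
    (hγs : (T.map fun j => γ ^ j).sum = γ ^ k)
    (hδs : (T.map fun j => δ ^ j).sum = δ ^ k) : False := by
  have hγ0 : 0 < γ := hδ.trans hδγ
  have key : (T.map fun j => δ ^ k * γ ^ j).sum < (T.map fun j => γ ^ k * δ ^ j).sum := by
    apply Multiset.sum_lt_sum_of_nonempty hT
    intro j hj
    have hkj := hall j hj
    obtain ⟨d, hd⟩ : ∃ d, k = j + (d + 1) := ⟨k - j - 1, by omega⟩
    subst hd
    have h1 : δ ^ (d + 1) < γ ^ (d + 1) := pow_lt_pow_left₀ hδγ hδ.le (Nat.succ_ne_zero d)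
    have h2 : (0 : ℝ) < γ ^ j * δ ^ j := by positivity
    calc δ ^ (j + (d + 1)) * γ ^ j = (γ ^ j * δ ^ j) * δ ^ (d + 1) := by rw [pow_add]; ring
      _ < (γ ^ j * δ ^ j) * γ ^ (d + 1) := mul_lt_mul_of_pos_left h1 h2
      _ = γ ^ (j + (d + 1)) * δ ^ j := by rw [pow_add]; ring
  rw [Multiset.sum_map_mul_left, Multiset.sum_map_mul_left, hγs, hδs] at key
  nlinarith [key]

lemma key_lemma {α β : ℝ} (hαpos : 0 < α) (hβpos : 0 < β) (hne : α ≠ β)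
    (hα1 : α ≠ 1) {T : Multiset ℕ} {k : ℕ}
    (hA : (T.map fun j => α ^ j).sum = α ^ k)
    (hB : (T.map fun j => β ^ j).sum = β ^ k) : T = {k} := by
  by_cases hk : k ∈ T
  · obtain ⟨T', rfl⟩ : ∃ T', T = k ::ₘ T' := ⟨T.erase k, (Multiset.cons_erase hk).symm⟩
    suffices h : T' = 0 by rw [h]; rfl
    by_contra hT'
    obtain ⟨j, hj⟩ := Multiset.exists_mem_of_ne_zero hT'
    have h1 : ∀ x ∈ T'.map fun j => α ^ j, (0 : ℝ) ≤ x := by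
      intro x hx
      obtain ⟨i, -, rfl⟩ := Multiset.mem_map.mp hx
      positivity
    have h2 : α ^ j ≤ (T'.map fun j => α ^ j).sum :=
      Multiset.single_le_sum h1 _ (Multiset.mem_map_of_mem _ hj)
    have h3 : α ^ k + (T'.map fun j => α ^ j).sum = α ^ k := by
      simpa using hA
    have h4 : (0 : ℝ) < α ^ j := by positivity
    linarith
  · have hT : T ≠ 0 := by
      rintro rfl
      have h4 : (0 : ℝ) < α ^ k := by positivity
      simp at hA
      linarith [hA.symm.le, h4]
    by_cases hhi : ∃ j ∈ T, k < j
    · by_cases hlo : ∃ j ∈ T, j < k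
      · exfalso
        have hnn : ∀ x ∈ T.map fun j => α ^ j, (0 : ℝ) ≤ x := by
          intro x hx
          obtain ⟨i, -, rfl⟩ := Multiset.mem_map.mp hx
          positivity
        rcases lt_or_gt_of_ne hα1 with h1 | h1
        · obtain ⟨j, hjT, hjk⟩ := hlo
          have hlt : α ^ k < α ^ j := pow_lt_pow_right_of_lt_one₀ hαpos h1 hjk
          have hle : α ^ j ≤ (T.map fun j => α ^ j).sum :=
            Multiset.single_le_sum hnn _ (Multiset.mem_map_of_mem _ hjT)
          linarith [hA.le, hA.ge]
        · obtain ⟨j, hjT, hjk⟩ := hhi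
          have hlt : α ^ k < α ^ j := pow_lt_pow_right₀ h1 hjk
          have hle : α ^ j ≤ (T.map fun j => α ^ j).sum :=
            Multiset.single_le_sum hnn _ (Multiset.mem_map_of_mem _ hjT)
          linarith [hA.le, hA.ge]
      · push_neg at hlo
        have hall : ∀ j ∈ T, k < j := by
          intro j hj
          have h1 := hlo j hj
          have h2 : j ≠ k := fun h => hk (h ▸ hj)
          omega
        exfalso
        rcases lt_or_gt_of_ne hne with h | h
        · exact no_rep_hi hαpos h hT hall hB hA
        · exact no_rep_hi hβpos h hT hall hA hB
    · push_neg at hhi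
      have hall : ∀ j ∈ T, j < k := by
        intro j hj
        have h1 := hhi j hj
        have h2 : j ≠ k := fun h => hk (h ▸ hj)
        omega
      exfalso
      rcases lt_or_gt_of_ne hne with h | h
      · exact no_rep_lo hαpos h hT hall hB hA
      · exact no_rep_lo hβpos h hT hall hA hB

lemma cast_sum_pow (α : ℝ) (T : Multiset ℕ) :
    (((T.map fun n => α ^ n).sum : ℝ) : ℂ) = (T.map fun n => (α : ℂ) ^ n).sum := by
  induction T using Multiset.induction with
  | empty => simp
  | cons j T ih =>
    simp only [Multiset.map_cons, Multiset.sum_cons]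
    push_cast [← ih]
    ring

lemma mem_Malpha_iff (α : ℝ) (x : ℂ) :
    x ∈ Malpha (α : ℂ) ↔ ∃ T : Multiset ℕ, x = (T.map fun n => (α : ℂ) ^ n).sum := by
  constructor
  · intro hx
    induction hx using AddSubmonoid.closure_induction with
    | mem y hy =>
      obtain ⟨n, rfl⟩ := hy
      exact ⟨{n}, by simp⟩
    | zero => exact ⟨0, by simp⟩
    | add x y hx hy ihx ihy =>
      obtain ⟨T1, rfl⟩ := ihx
      obtain ⟨T2, rfl⟩ := ihy
      exact ⟨T1 + T2, by rw [Multiset.map_add, Multiset.sum_add]⟩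
  · rintro ⟨T, rfl⟩
    induction T using Multiset.induction with
    | empty => simp
    | cons j T ih =>
      simp only [Multiset.map_cons, Multiset.sum_cons]
      exact AddSubmonoid.add_mem _ (AddSubmonoid.subset_closure ⟨j, rfl⟩) ih

lemma powers_rep {M : Type*} (f : ℕ → M) :
    ∀ s : Multiset M, (∀ x ∈ s, ∃ e : ℕ, x = f e) → ∃ T : Multiset ℕ, s = T.map f := by
  intro s
  induction s using Multiset.induction with
  | empty => exact fun _ => ⟨0, rfl⟩
  | cons x s ih =>
    intro h
    obtain ⟨e, he⟩ := h x (Multiset.mem_cons_self x s)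
    obtain ⟨T, hT⟩ := ih fun y hy => h y (Multiset.mem_cons_of_mem hy)
    exact ⟨e ::ₘ T, by rw [Multiset.map_cons, ← he, ← hT]⟩

end Stmt10Aux

set_option maxHeartbeats 1000000 in
open Stmt10Aux in
theorem stmt_10 (a b c : ℕ) (ha : 0 < a) (hb : 0 < b) (hc : 0 < c)
    (hgcd : Nat.gcd a (Nat.gcd b c) = 1)
    (hdisc : 4 * a * c < b ^ 2)
    (hirr : Irrational (Real.sqrt ((b : ℝ) ^ 2 - 4 * a * c)))
    (α : ℝ) (hroot : (a : ℝ) * α ^ 2 - (b : ℝ) * α + (c : ℝ) = 0) :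
    IsAtomicMalpha (α : ℂ) ∧
    atomsM (α : ℂ) = Set.range (fun n : ℕ => (α : ℂ) ^ n) ∧
    (atomsM (α : ℂ)).Infinite ∧
    strongAtomsM (α : ℂ) = {1} := by
  have haR : (0 : ℝ) < a := by exact_mod_cast ha
  have hbR : (0 : ℝ) < b := by exact_mod_cast hb
  have hcR : (0 : ℝ) < c := by exact_mod_cast hc
  have ha0 : (a : ℝ) ≠ 0 := ne_of_gt haR
  -- α is positive
  have hαpos : 0 < α := by
    by_contra h
    push_neg at h
    nlinarith [sq_nonneg α, mul_nonneg haR.le (sq_nonneg α)]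
  -- α is irrational
  have hsq : ((2 * a) * α - b) ^ 2 = (b : ℝ) ^ 2 - 4 * a * c := by
    linear_combination (4 * (a : ℝ)) * hroot
  have hirr2 : Irrational ((2 * a) * α - b) := by
    rw [← hsq, Real.sqrt_sq_eq_abs] at hirr
    rcases abs_cases ((2 * a) * α - b) with ⟨h1, -⟩ | ⟨h1, -⟩
    · rwa [h1] at hirr
    · rw [h1] at hirr
      intro ⟨q, hq⟩
      exact hirr ⟨-q, by push_cast; linarith [hq]⟩
  have hirrα : Irrational α := by
    intro ⟨q, hq⟩
    exact hirr2 ⟨2 * a * q - b, by push_cast; rw [hq]⟩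
  -- the conjugate root β
  set β : ℝ := (b : ℝ) / a - α with hβdef
  have haβ : (a : ℝ) * β = (b : ℝ) - (a : ℝ) * α := by
    rw [hβdef]
    field_simp
  have hrootβ : (a : ℝ) * β ^ 2 - (b : ℝ) * β + (c : ℝ) = 0 := by
    have h2 : (a : ℝ) * ((a : ℝ) * β ^ 2 - (b : ℝ) * β + (c : ℝ)) = 0 := by
      linear_combination ((a : ℝ) * β + (b : ℝ) - (a : ℝ) * α) * haβ - (b : ℝ) * haβ
        + (a : ℝ) * hroot
    rcases mul_eq_zero.mp h2 with h | h
    · exact absurd h ha0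
    · exact h
  have hβpos : 0 < β := by
    by_contra h
    push_neg at h
    nlinarith [mul_nonneg haR.le (sq_nonneg β)]
  have hirrβ : Irrational β := by
    intro ⟨q, hq⟩
    exact hirrα ⟨(b : ℚ) / a - q, by push_cast; rw [hq, hβdef]; ring⟩
  have hne : α ≠ β := by
    intro h
    apply hirrα
    refine ⟨(b : ℚ) / (2 * a), ?_⟩
    have h2 : 2 * α = (b : ℝ) / a := by rw [hβdef] at h; linarith
    push_cast
    rw [div_eq_iff (by positivity)]
    field_simp at h2
    linarith
  have hα1 : α ≠ 1 := fun h => hirrα ⟨1, by rw [h]; simp⟩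
  have hβ1 : β ≠ 1 := fun h => hirrβ ⟨1, by rw [h]; simp⟩
  -- the quadratic relation in normalized form
  set rr : ℚ := (b : ℚ) / a with hrr
  set ss : ℚ := (c : ℚ) / a with hss
  have hrrR : (rr : ℝ) = (b : ℝ) / a := by rw [hrr]; push_cast; ring
  have hssR : (ss : ℝ) = (c : ℝ) / a := by rw [hss]; push_cast; ring
  have hxα : α ^ 2 = (rr : ℝ) * α - (ss : ℝ) := by
    rw [hrrR, hssR]
    field_simp
    linear_combination hroot
  have hxβ : β ^ 2 = (rr : ℝ) * β - (ss : ℝ) := by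
    rw [hrrR, hssR]
    field_simp
    linear_combination hrootβ
  -- every representation of α^k as a sum of powers is trivial (real version)
  have main : ∀ (T : Multiset ℕ) (k : ℕ), (T.map fun n => α ^ n).sum = α ^ k → T = {k} := by
    intro T k hA
    have hsumα := sum_pow_coords rr ss α hxα T
    have hpkα := pow_eq_pq rr ss α hxα k
    rw [hA, hpkα] at hsumα
    have hco := rat_coords hirrα hsumα.symm
    have hB : (T.map fun n => β ^ n).sum = β ^ k := by
      rw [sum_pow_coords rr ss β hxβ T, pow_eq_pq rr ss β hxβ k, hco.1, hco.2]
    exact key_lemma hαpos hβpos hne hα1 hA hB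
  -- complex version
  have mainC : ∀ (T : Multiset ℕ) (k : ℕ),
      (T.map fun n => (α : ℂ) ^ n).sum = (α : ℂ) ^ k → T = {k} := by
    intro T k h
    apply main T k
    have h2 : (((T.map fun n => α ^ n).sum : ℝ) : ℂ) = ((α ^ k : ℝ) : ℂ) := by
      rw [cast_sum_pow, h]
      push_cast
      ring
    exact_mod_cast h2
  have hpow_mem : ∀ n : ℕ, (α : ℂ) ^ n ∈ Malpha (α : ℂ) :=
    fun n => AddSubmonoid.subset_closure ⟨n, rfl⟩
  have hαC0 : (α : ℂ) ≠ 0 := by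
    simpa using ne_of_gt hαpos
  have hpow_ne : ∀ n : ℕ, (α : ℂ) ^ n ≠ 0 := fun n => pow_ne_zero n hαC0
  -- the atoms are exactly the powers of α
  have hatoms : atomsM (α : ℂ) = Set.range (fun n : ℕ => (α : ℂ) ^ n) := by
    ext x
    constructor
    · rintro ⟨hxM, hx0, hxatom⟩
      obtain ⟨T, rfl⟩ := (mem_Malpha_iff α x).mp hxM
      have hT : T ≠ 0 := by
        rintro rfl
        simp at hx0
      obtain ⟨j, hj⟩ := Multiset.exists_mem_of_ne_zero hT
      obtain ⟨T', rfl⟩ : ∃ T', T = j ::ₘ T' := ⟨T.erase j, (Multiset.cons_erase hj).symm⟩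
      have hrest : ((T'.map fun n => (α : ℂ) ^ n).sum) ∈ Malpha (α : ℂ) :=
        (mem_Malpha_iff α _).mpr ⟨T', rfl⟩
      rcases hxatom ((α : ℂ) ^ j) ((T'.map fun n => (α : ℂ) ^ n).sum) (hpow_mem j) hrest
          (by simp) with h | h
      · exact absurd h (hpow_ne j)
      · exact ⟨j, by simp [h]⟩
    · rintro ⟨k, rfl⟩
      refine ⟨hpow_mem k, hpow_ne k, ?_⟩
      intro u v hu hv huv
      obtain ⟨Tu, rfl⟩ := (mem_Malpha_iff α u).mp hu
      obtain ⟨Tv, rfl⟩ := (mem_Malpha_iff α v).mp hv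
      have hsum : ((Tu + Tv).map fun n => (α : ℂ) ^ n).sum = (α : ℂ) ^ k := by
        rw [Multiset.map_add, Multiset.sum_add]
        exact huv.symm
      have hTT := mainC _ _ hsum
      have hcard : Multiset.card Tu + Multiset.card Tv = 1 := by
        have h1 := congrArg Multiset.card hTT
        simpa using h1
      have h0 : Multiset.card Tu = 0 ∨ Multiset.card Tv = 0 := by omega
      rcases h0 with h | h
      · left; rw [Multiset.card_eq_zero.mp h]; simp
      · right; rw [Multiset.card_eq_zero.mp h]; simp
  -- atomicity
  have hatomic : IsAtomicMalpha (α : ℂ) := by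
    intro x hx hx0
    obtain ⟨T, rfl⟩ := (mem_Malpha_iff α x).mp hx
    refine ⟨T.map fun n => (α : ℂ) ^ n, ?_, rfl⟩
    intro y hy
    obtain ⟨n, -, rfl⟩ := Multiset.mem_map.mp hy
    rw [hatoms]
    exact ⟨n, rfl⟩
  -- infinitude
  have hinj : Function.Injective fun n : ℕ => (α : ℂ) ^ n := by
    intro m n h
    simp only at h
    have hx : α ^ m = α ^ n := by exact_mod_cast h
    rcases lt_or_gt_of_ne hα1 with h1 | h1
    · rcases lt_trichotomy m n with hmn | hmn | hmn
      · have := pow_lt_pow_right_of_lt_one₀ hαpos h1 hmn; linarith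
      · exact hmn
      · have := pow_lt_pow_right_of_lt_one₀ hαpos h1 hmn; linarith
    · rcases lt_trichotomy m n with hmn | hmn | hmn
      · have := pow_lt_pow_right₀ h1 hmn; linarith
      · exact hmn
      · have := pow_lt_pow_right₀ h1 hmn; linarith
  have hinf : (atomsM (α : ℂ)).Infinite := by
    rw [hatoms]
    exact Set.infinite_range_of_injective hinj
  -- strong atoms
  have hrootC : (a : ℂ) * (α : ℂ) ^ 2 - (b : ℂ) * (α : ℂ) + (c : ℂ) = 0 := by
    exact_mod_cast congrArg (Complex.ofReal) hroot
  have hstrong : strongAtomsM (α : ℂ) = {1} := by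
    ext x
    constructor
    · rintro ⟨hxatom, hstr⟩
      have hx := hxatom
      rw [hatoms] at hx
      obtain ⟨k, rfl⟩ := hx
      rcases k with _ | k'
      · simp
      · exfalso
        have hmem : ∀ y ∈ Multiset.replicate a ((α : ℂ) ^ (k' + 2))
            + Multiset.replicate c ((α : ℂ) ^ k'), y ∈ atomsM (α : ℂ) := by
          intro y hy
          rw [hatoms]
          rcases Multiset.mem_add.mp hy with h | h
          · rw [Multiset.eq_of_mem_replicate h]; exact ⟨k' + 2, rfl⟩
          · rw [Multiset.eq_of_mem_replicate h]; exact ⟨k', rfl⟩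
        have hsum : (Multiset.replicate a ((α : ℂ) ^ (k' + 2))
            + Multiset.replicate c ((α : ℂ) ^ k')).sum = b • (α : ℂ) ^ (k' + 1) := by
          rw [Multiset.sum_add, Multiset.sum_replicate, Multiset.sum_replicate]
          simp only [nsmul_eq_mul]
          linear_combination (α : ℂ) ^ k' * hrootC
        have hrep := hstr b hb _ hmem hsum
        have hmem2 : (α : ℂ) ^ (k' + 2) ∈ Multiset.replicate b ((α : ℂ) ^ (k' + 1)) := by
          rw [← hrep]
          exact Multiset.mem_add.mpr (Or.inl (Multiset.mem_replicate.mpr ⟨ha.ne', rfl⟩))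
        have heq := Multiset.eq_of_mem_replicate hmem2
        have heqR : α ^ (k' + 2) = α ^ (k' + 1) := by exact_mod_cast heq
        have : α = 1 := by
          have h1 : α ^ (k' + 1) * α = α ^ (k' + 1) * 1 := by
            rw [mul_one, ← pow_succ]; exact heqR
          exact mul_left_cancel₀ (pow_ne_zero _ (ne_of_gt hαpos)) h1
        exact hα1 this
    · intro hx
      simp only [Set.mem_singleton_iff] at hx
      subst hx
      have hatom1 : (1 : ℂ) ∈ atomsM (α : ℂ) := by
        rw [hatoms]; exact ⟨0, by simp⟩
      refine ⟨hatom1, ?_⟩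
      intro n hn s hs hsum
      have hpows : ∀ y ∈ s, ∃ e : ℕ, y = (α : ℂ) ^ e := by
        intro y hy
        have := hs y hy
        rw [hatoms] at this
        obtain ⟨e, he⟩ := this
        exact ⟨e, he.symm⟩
      obtain ⟨T, rfl⟩ := powers_rep _ s hpows
      have hsC : (T.map fun e => (α : ℂ) ^ e).sum = ((n : ℝ) : ℂ) := by
        rw [hsum]
        simp [nsmul_eq_mul]
      have hsR : (T.map fun e => α ^ e).sum = (n : ℝ) := by
        have := cast_sum_pow α T
        rw [hsC] at this
        exact_mod_cast this
      -- coordinates: the α-coordinate vanishes, so all exponents are 0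
      rw [sum_pow_coords rr ss α hxα T] at hsR
      have hco : ((T.map fun j => (pqSeq rr ss j).1).sum : ℚ) = (n : ℚ)
          ∧ ((T.map fun j => (pqSeq rr ss j).2).sum : ℚ) = 0 := by
        apply rat_coords hirrα
        push_cast
        push_cast at hsR
        linarith [hsR]
      -- positivity of the q-coordinates
      have hqpos : ∀ j : ℕ, j ≠ 0 → 0 < (pqSeq rr ss j).2 := by
        intro j hj
        have h1 := pow_eq_pq rr ss α hxα j
        have h2 := pow_eq_pq rr ss β hxβ j
        rcases lt_or_gt_of_ne hne with h | h
        · have h3 : β ^ j - α ^ j = ((pqSeq rr ss j).2 : ℝ) * (β - α) := by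
            rw [h1, h2]; ring
          have h4 : α ^ j < β ^ j := pow_lt_pow_left₀ h hαpos.le hj
          have h5 : (0 : ℝ) < ((pqSeq rr ss j).2 : ℝ) := by
            have h6 : (0 : ℝ) < β - α := by linarith
            nlinarith
          exact_mod_cast h5
        · have h3 : α ^ j - β ^ j = ((pqSeq rr ss j).2 : ℝ) * (α - β) := by
            rw [h1, h2]; ring
          have h4 : β ^ j < α ^ j := pow_lt_pow_left₀ h hβpos.le hj
          have h5 : (0 : ℝ) < ((pqSeq rr ss j).2 : ℝ) := by
            have h6 : (0 : ℝ) < α - β := by linarith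
            nlinarith
          exact_mod_cast h5
      have hqnn : ∀ j : ℕ, 0 ≤ (pqSeq rr ss j).2 := by
        intro j
        rcases Nat.eq_zero_or_pos j with h | h
        · subst h; simp [pqSeq]
        · exact (hqpos j (by omega)).le
      have hT0 : ∀ j ∈ T, j = 0 := by
        intro j hj
        by_contra hj0
        have h1 : (0 : ℚ) < (pqSeq rr ss j).2 := hqpos j hj0
        have h2 : ∀ x ∈ T.map fun j => (pqSeq rr ss j).2, (0 : ℚ) ≤ x := by
          intro x hx
          obtain ⟨i, -, rfl⟩ := Multiset.mem_map.mp hx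
          exact hqnn i
        have h3 : (pqSeq rr ss j).2 ≤ (T.map fun j => (pqSeq rr ss j).2).sum :=
          Multiset.single_le_sum h2 _ (Multiset.mem_map_of_mem _ hj)
        rw [hco.2] at h3
        linarith
      have hTrep : T = Multiset.replicate (Multiset.card T) 0 :=
        Multiset.eq_replicate_card.mpr hT0
      have hcardn : Multiset.card T = n := by
        have h1 : (Multiset.map (fun e => (α : ℂ) ^ e)
            (Multiset.replicate (Multiset.card T) 0)).sum = (Multiset.card T : ℂ) := by
          rw [Multiset.map_replicate, Multiset.sum_replicate]
          simp
        have h2 : ((Multiset.card T : ℕ) : ℂ) = ((n : ℕ) : ℂ) := by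
          rw [← h1, ← hTrep, hsC]
          push_cast
          ring
        exact_mod_cast h2
      rw [hTrep, hcardn, Multiset.map_replicate]
      simp
  exact ⟨hatomic, hatoms, hinf, hstrong⟩
end

section
/- Let a, b, c ∈ ℕ be positive integers with gcd(a,b,c) = 1 and with √(b²+4ac) irrational, and let α be a root of ax² − bx − c. Then the set of strong atoms of M_α is exactly S(M_α) = {1, α}. -/
open Polynomial

/-! ### Auxiliary lemmas -/

lemma mem_Malpha_iff {α : ℂ} {x : ℂ} :
    x ∈ Malpha α ↔ ∃ p : Polynomial ℕ, aeval α p = x := by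
  constructor
  · intro hx
    induction hx using AddSubmonoid.closure_induction with
    | mem y hy => obtain ⟨n, rfl⟩ := hy; exact ⟨X ^ n, by simp⟩
    | zero => exact ⟨0, by simp⟩
    | add y z _ _ hy hz => obtain ⟨p, rfl⟩ := hy; obtain ⟨q, rfl⟩ := hz; exact ⟨p + q, by simp⟩
  · rintro ⟨p, rfl⟩
    induction p using Polynomial.induction_on' with
    | add p q hp hq => simpa [map_add] using AddSubmonoid.add_mem _ hp hq
    | monomial n k =>
      have h : (aeval α) (monomial n k) = k • α ^ n := by
        simp [aeval_monomial, nsmul_eq_mul]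
      rw [h]
      exact AddSubmonoid.nsmul_mem _ (AddSubmonoid.subset_closure (Set.mem_range.mpr ⟨n, rfl⟩)) k

lemma aeval_nat_sum (x : ℝ) (P : Polynomial ℕ) :
    (aeval x P : ℝ) = ∑ i ∈ P.support, (P.coeff i : ℝ) * x ^ i := by
  rw [aeval_def, eval₂_eq_sum, Polynomial.sum_def]
  simp

lemma fact_pos1 {s t : ℝ} (ht : 0 < t) (hts : t < s) {i : ℕ} (hi : i ≠ 0) :
    0 < s ^ i - (-t) ^ i := by
  have hs : 0 < s := ht.trans hts
  rcases Nat.even_or_odd i with he | ho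
  · rw [he.neg_pow]
    have := pow_lt_pow_left₀ hts ht.le hi
    linarith
  · rw [ho.neg_pow]
    have h1 : 0 < s ^ i := pow_pos hs i
    have h2 : 0 < t ^ i := pow_pos ht i
    linarith

lemma fact_pos2 {s t : ℝ} (ht : 0 < t) (hts : t < s) {i : ℕ} (hi : i ≠ 1) :
    0 < t * s ^ i + s * (-t) ^ i := by
  have hs : 0 < s := ht.trans hts
  rcases Nat.even_or_odd i with he | ho
  · rw [he.neg_pow]
    have h1 : 0 < s ^ i := pow_pos hs i
    have h2 : 0 < t ^ i := pow_pos ht i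
    nlinarith
  · obtain ⟨j, rfl⟩ := ho
    rw [(odd_two_mul_add_one j).neg_pow]
    have hj : j ≠ 0 := by rintro rfl; simp at hi
    have hlt : t ^ (2 * j) < s ^ (2 * j) := pow_lt_pow_left₀ hts ht.le (by positivity)
    have e : t * s ^ (2 * j + 1) + s * -(t ^ (2 * j + 1)) = s * t * (s ^ (2 * j) - t ^ (2 * j)) := by
      ring
    rw [e]
    have := mul_pos hs ht
    nlinarith

lemma poly_eq_C {s t : ℝ} (ht : 0 < t) (hts : t < s) (P : Polynomial ℕ) (k : ℕ)
    (h1 : aeval s P = (k : ℝ)) (h2 : aeval (-t) P = (k : ℝ)) : P = C k := by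
  have hzero : ∑ i ∈ P.support, (P.coeff i : ℝ) * (s ^ i - (-t) ^ i) = 0 := by
    have h : ∑ i ∈ P.support, ((P.coeff i : ℝ) * s ^ i - (P.coeff i : ℝ) * (-t) ^ i) = 0 := by
      rw [Finset.sum_sub_distrib, ← aeval_nat_sum, ← aeval_nat_sum, h1, h2, sub_self]
    simpa [mul_sub] using h
  have hterms := (Finset.sum_eq_zero_iff_of_nonneg ?_).mp hzero
  swap
  · intro i hi
    rcases eq_or_ne i 0 with rfl | h0
    · simp
    · exact mul_nonneg (by positivity) (fact_pos1 ht hts h0).le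
  have hsupp : ∀ i, i ≠ 0 → P.coeff i = 0 := by
    intro i h0
    by_contra hne
    have hi : i ∈ P.support := mem_support_iff.mpr hne
    have := hterms i hi
    have hpos := fact_pos1 ht hts h0
    have hc : (P.coeff i : ℝ) = 0 := by
      rcases mul_eq_zero.mp this with h | h
      · exact h
      · exact absurd h hpos.ne'
    exact hne (by exact_mod_cast hc)
  have hP : P = C (P.coeff 0) := by
    ext i
    rcases eq_or_ne i 0 with rfl | h0
    · simp
    · simp [coeff_C, h0, hsupp i h0]
  have hk : P.coeff 0 = k := by
    rw [hP] at h1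
    simp only [map_natCast, aeval_C, eq_natCast] at h1
    exact_mod_cast h1
  rw [hP, hk]

lemma poly_eq_X {s t : ℝ} (ht : 0 < t) (hts : t < s) (P : Polynomial ℕ) (k : ℕ)
    (h1 : aeval s P = (k : ℝ) * s) (h2 : aeval (-t) P = -((k : ℝ) * t)) : P = C k * X := by
  have hs : 0 < s := ht.trans hts
  have hzero : ∑ i ∈ P.support, (P.coeff i : ℝ) * (t * s ^ i + s * (-t) ^ i) = 0 := by
    have h : ∑ i ∈ P.support, (t * ((P.coeff i : ℝ) * s ^ i) + s * ((P.coeff i : ℝ) * (-t) ^ i)) = 0 := by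
      rw [Finset.sum_add_distrib, ← Finset.mul_sum, ← Finset.mul_sum,
        ← aeval_nat_sum, ← aeval_nat_sum, h1, h2]
      ring
    rw [← h]
    apply Finset.sum_congr rfl
    intro i _
    ring
  have hterms := (Finset.sum_eq_zero_iff_of_nonneg ?_).mp hzero
  swap
  · intro i hi
    rcases eq_or_ne i 1 with rfl | h0
    · have h : t * s ^ 1 + s * (-t) ^ 1 = 0 := by ring
      rw [h, mul_zero]
    · exact mul_nonneg (by positivity) (fact_pos2 ht hts h0).le
  have hsupp : ∀ i, i ≠ 1 → P.coeff i = 0 := by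
    intro i h0
    by_contra hne
    have hi : i ∈ P.support := mem_support_iff.mpr hne
    have hz := hterms i hi
    have hpos := fact_pos2 ht hts h0
    have hc : (P.coeff i : ℝ) = 0 := by
      rcases mul_eq_zero.mp hz with h | h
      · exact h
      · exact absurd h hpos.ne'
    exact hne (by exact_mod_cast hc)
  have hP : P = C (P.coeff 1) * X := by
    ext i
    rcases eq_or_ne i 1 with rfl | h0
    · simp
    · simp [coeff_C_mul, coeff_X, h0, Ne.symm h0, hsupp i h0]
  have hk : P.coeff 1 = k := by
    rw [hP] at h1
    simp only [map_mul, map_natCast, aeval_C, aeval_X, eq_natCast] at h1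
    have h : ((P.coeff 1 : ℝ) - k) * s = 0 := by linarith
    rcases mul_eq_zero.mp h with h | h
    · have : (P.coeff 1 : ℝ) = k := by linarith
      exact_mod_cast this
    · exact absurd h hs.ne'
  rw [hP, hk]

lemma degree_le_one_of_lt_two {d : WithBot ℕ} (h : d < 2) : d ≤ 1 := by
  cases d with
  | bot => exact bot_le
  | coe n =>
    have h2 : ((2:ℕ) : WithBot ℕ) = (2 : WithBot ℕ) := rfl
    have h1 : ((1:ℕ) : WithBot ℕ) = (1 : WithBot ℕ) := rfl
    rw [← h2] at h
    rw [← h1]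
    exact WithBot.coe_le_coe.mpr (Nat.lt_succ_iff.mp (WithBot.coe_lt_coe.mp h))

lemma transfer_root (f₁ : Polynomial ℚ) (hmon : f₁.Monic) (hdeg : f₁.degree ≤ 2)
    (r r' : ℝ) (hr : Irrational r) (h1 : aeval r f₁ = 0) (h2 : aeval r' f₁ = 0)
    (q : Polynomial ℚ) (hq : aeval r q = 0) : aeval r' q = 0 := by
  have hdiv : q %ₘ f₁ + f₁ * (q /ₘ f₁) = q := modByMonic_add_div q f₁
  have hdm : (q %ₘ f₁).degree ≤ 1 :=
    degree_le_one_of_lt_two (lt_of_lt_of_le (degree_modByMonic_lt q hmon) hdeg)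
  have hrep : q %ₘ f₁ = C ((q %ₘ f₁).coeff 1) * X + C ((q %ₘ f₁).coeff 0) :=
    eq_X_add_C_of_degree_le_one hdm
  have hmr : aeval r (q %ₘ f₁) = 0 := by
    have := congrArg (aeval r) hdiv
    simp only [map_add, map_mul, h1, zero_mul, add_zero, hq] at this
    linarith [this]
  set c1 := (q %ₘ f₁).coeff 1
  set c0 := (q %ₘ f₁).coeff 0
  have hlin : (c1 : ℝ) * r + (c0 : ℝ) = 0 := by
    rw [hrep] at hmr
    simpa [map_add, map_mul, aeval_C, aeval_X, eq_ratCast] using hmr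
  have hc1 : c1 = 0 := by
    by_contra hne
    apply hr
    refine ⟨-c0 / c1, ?_⟩
    push_cast
    have : (c1 : ℝ) ≠ 0 := by exact_mod_cast hne
    field_simp
    linarith
  have hc0 : c0 = 0 := by
    rw [hc1] at hlin
    push_cast at hlin
    simp at hlin
    exact_mod_cast hlin
  have hm0 : q %ₘ f₁ = 0 := by rw [hrep, hc1, hc0]; simp
  have hq' : q = f₁ * (q /ₘ f₁) := by nth_rewrite 1 [← hdiv]; rw [hm0, zero_add]
  have hfin := congrArg (aeval r') hq'
  simp only [map_mul, h2, zero_mul] at hfin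
  exact hfin

lemma transfer_both (f₁ : Polynomial ℚ) (hmon : f₁.Monic) (hdeg : f₁.degree ≤ 2)
    (r r' : ℝ) (hr : Irrational r) (h1 : aeval r f₁ = 0) (h2 : aeval r' f₁ = 0)
    (α : ℂ) (hα : α = (r : ℂ))
    (P : Polynomial ℕ) (k₀ k₁ : ℕ) (hP : aeval α P = (k₀:ℂ) + (k₁:ℂ) * α) :
    aeval r P = (k₀:ℝ) + k₁ * r ∧ aeval r' P = (k₀:ℝ) + k₁ * r' := by
  rw [hα] at hP
  have hcomm : aeval ((r:ℝ) : ℂ) P = ((aeval r P : ℝ) : ℂ) :=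
    aeval_algHom_apply (Complex.ofRealAm.restrictScalars ℕ) r P
  have hr1 : aeval r P = (k₀:ℝ) + k₁ * r := by
    have h2' : ((aeval r P : ℝ) : ℂ) = (((k₀:ℝ) + (k₁:ℝ) * r : ℝ) : ℂ) := by
      rw [← hcomm, hP]; push_cast; ring
    exact_mod_cast h2'
  refine ⟨hr1, ?_⟩
  set Q : Polynomial ℚ := P.map (algebraMap ℕ ℚ) - (C (k₀:ℚ) + C (k₁:ℚ) * X) with hQ
  have hQr : aeval r Q = 0 := by
    rw [hQ]
    simp only [map_sub, map_add, map_mul, aeval_C, aeval_X, aeval_map_algebraMap]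
    have hcast : ∀ q : ℚ, (algebraMap ℚ ℝ) q = (q : ℝ) := fun q => rfl
    rw [hcast, hcast, hr1]
    push_cast
    ring
  have hQr' : aeval r' Q = 0 := transfer_root f₁ hmon hdeg r r' hr h1 h2 Q hQr
  rw [hQ] at hQr'
  simp only [map_sub, map_add, map_mul, aeval_C, aeval_X, aeval_map_algebraMap] at hQr'
  have hcast : ∀ q : ℚ, (algebraMap ℚ ℝ) q = (q : ℝ) := fun q => rfl
  rw [hcast, hcast] at hQr'
  push_cast at hQr'
  linarith [hQr']

lemma setup_roots (a b c : ℕ) (ha : 0 < a) (hb : 0 < b) (hc : 0 < c)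
    (hirr : Irrational (Real.sqrt ((b : ℝ) ^ 2 + 4 * a * c)))
    (α : ℂ) (hroot : (a : ℂ) * α ^ 2 - (b : ℂ) * α - (c : ℂ) = 0) :
    ∃ s t : ℝ, 0 < t ∧ t < s ∧ Irrational s ∧ Irrational (-t) ∧
      (a : ℝ) * s ^ 2 - b * s - c = 0 ∧ (a : ℝ) * (-t) ^ 2 - b * (-t) - c = 0 ∧
      (α = (s : ℂ) ∨ α = ((-t : ℝ) : ℂ)) := by
  have haR : (0:ℝ) < a := by exact_mod_cast ha
  have hbR : (0:ℝ) < b := by exact_mod_cast hb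
  have hcR : (0:ℝ) < c := by exact_mod_cast hc
  set D : ℝ := (b : ℝ) ^ 2 + 4 * a * c with hD
  have hD0 : 0 ≤ D := by positivity
  set S : ℝ := Real.sqrt D with hS
  have hS2 : S ^ 2 = D := Real.sq_sqrt hD0
  have hS2' : S ^ 2 = (b:ℝ) ^ 2 + 4 * a * c := by rw [hS2]
  have hS0 : 0 ≤ S := Real.sqrt_nonneg D
  have hSb : (b : ℝ) < S := by nlinarith
  set sR : ℝ := ((b:ℝ) + S) / (2 * a) with hsRdef
  set tR : ℝ := (S - (b:ℝ)) / (2 * a) with htRdef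
  have h2as : 2 * (a:ℝ) * sR = b + S := by rw [hsRdef]; field_simp
  have h2at : 2 * (a:ℝ) * (-tR) = b - S := by rw [htRdef]; field_simp; ring
  have hsR : (a : ℝ) * sR ^ 2 - b * sR - c = 0 := by
    have h4 : 4*(a:ℝ) * ((a:ℝ) * sR ^ 2 - b * sR - c) = 0 := by
      have hsq : (2 * (a:ℝ) * sR - b) ^ 2 = (b:ℝ) ^ 2 + 4 * a * c := by
        rw [h2as]; linear_combination hS2'
      linear_combination hsq
    rcases mul_eq_zero.mp h4 with h | h
    · exact absurd h (by positivity)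
    · exact h
  have htR : (a : ℝ) * (-tR) ^ 2 - b * (-tR) - c = 0 := by
    have h4 : 4*(a:ℝ) * ((a:ℝ) * (-tR) ^ 2 - b * (-tR) - c) = 0 := by
      have hsq : (2 * (a:ℝ) * (-tR) - b) ^ 2 = (b:ℝ) ^ 2 + 4 * a * c := by
        rw [h2at]; linear_combination hS2'
      linear_combination hsq
    rcases mul_eq_zero.mp h4 with h | h
    · exact absurd h (by positivity)
    · exact h
  have ht0 : 0 < tR := by apply div_pos (by linarith) (by positivity)
  have hts : tR < sR := by apply div_lt_div_of_pos_right (by linarith) (by positivity)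
  refine ⟨sR, tR, ht0, hts, ?_, ?_, hsR, htR, ?_⟩
  · have h2 : Irrational (((b:ℝ) + S) / ((2 * a : ℕ) : ℝ)) :=
      (hirr.natCast_add b).div_natCast (by omega)
    have he : ((2 * a : ℕ) : ℝ) = 2 * (a:ℝ) := by push_cast; ring
    rw [he] at h2
    exact h2
  · have h2 : Irrational (((b:ℝ) - S) / ((2 * a : ℕ) : ℝ)) :=
      (hirr.natCast_sub b).div_natCast (by omega)
    have he : -tR = ((b:ℝ) - S) / ((2 * a : ℕ) : ℝ) := by
      rw [htRdef]; push_cast; ring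
    rwa [he]
  · have hu : (a : ℂ) * (sR : ℂ) ^ 2 - b * (sR : ℂ) - c = 0 := by
      have h : ((((a:ℝ) * sR ^ 2 - b * sR - c : ℝ)) : ℂ) = 0 := by rw [hsR]; norm_num
      push_cast at h
      linear_combination h
    have hv : (a : ℂ) * ((-tR : ℝ) : ℂ) ^ 2 - b * ((-tR : ℝ) : ℂ) - c = 0 := by
      have h : ((((a:ℝ) * (-tR) ^ 2 - b * (-tR) - c : ℝ)) : ℂ) = 0 := by rw [htR]; norm_num
      push_cast at h
      push_cast
      linear_combination h
    have hne : ((sR : ℝ) : ℂ) ≠ ((-tR : ℝ) : ℂ) := by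
      intro h
      have : sR = -tR := by exact_mod_cast h
      linarith
    have hsub : ((sR : ℝ) : ℂ) - ((-tR : ℝ) : ℂ) ≠ 0 := sub_ne_zero.mpr hne
    have hsum : (a : ℂ) * ((sR : ℂ) + ((-tR : ℝ) : ℂ)) = b := by
      apply mul_right_cancel₀ hsub
      push_cast at hu hv ⊢
      linear_combination hu - hv
    have hprod : (a : ℂ) * ((sR : ℂ) * ((-tR : ℝ) : ℂ)) = -c := by
      push_cast at hu hsum ⊢
      linear_combination (sR : ℂ) * hsum - hu
    have hfac : (a : ℂ) * ((α - (sR : ℂ)) * (α - ((-tR : ℝ) : ℂ))) = 0 := by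
      push_cast at hsum hprod ⊢
      linear_combination hroot - α * hsum + hprod
    have haC : (a : ℂ) ≠ 0 := by
      simp only [ne_eq, Nat.cast_eq_zero]
      omega
    rcases mul_eq_zero.mp hfac with h | h
    · exact absurd h haC
    rcases mul_eq_zero.mp h with h | h
    · left; rw [sub_eq_zero] at h; exact h
    · right; rw [sub_eq_zero] at h; exact h

theorem stmt_11 (a b c : ℕ) (ha : 0 < a) (hb : 0 < b) (hc : 0 < c)
    (hgcd : Nat.gcd a (Nat.gcd b c) = 1)
    (hirr : Irrational (Real.sqrt ((b : ℝ) ^ 2 + 4 * a * c)))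
    (α : ℂ) (hroot : (a : ℂ) * α ^ 2 - (b : ℂ) * α - (c : ℂ) = 0) :
    strongAtomsM α = {1, α} := by
  obtain ⟨s, t, ht0, hts, hsirr, htirr, hsq, htq, hαcase⟩ :=
    setup_roots a b c ha hb hc hirr α hroot
  have haR : (0:ℝ) < a := by exact_mod_cast ha
  have haQ : ((a:ℚ)) ≠ 0 := by exact_mod_cast ha.ne'
  -- the monic minimal polynomial over ℚ
  set f₁ : Polynomial ℚ := X ^ 2 - C ((b:ℚ)/a) * X - C ((c:ℚ)/a) with hf₁
  have hmon : f₁.Monic := by rw [hf₁]; monicity!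
  have hdeg : f₁.degree ≤ 2 := by rw [hf₁]; compute_degree
  have hcastQ : ∀ q : ℚ, (algebraMap ℚ ℝ) q = (q : ℝ) := fun q => rfl
  have hfs : aeval s f₁ = 0 := by
    rw [hf₁]
    simp only [map_sub, map_mul, map_pow, aeval_X, aeval_C]
    rw [hcastQ, hcastQ]
    push_cast
    field_simp
    linear_combination hsq
  have hft : aeval (-t) f₁ = 0 := by
    rw [hf₁]
    simp only [map_sub, map_mul, map_pow, aeval_X, aeval_C]
    rw [hcastQ, hcastQ]
    push_cast
    field_simp
    linear_combination htq
  -- the two evaluations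
  have transfer2 : ∀ (P : Polynomial ℕ) (k₀ k₁ : ℕ), aeval α P = (k₀:ℂ) + (k₁:ℂ) * α →
      aeval s P = (k₀:ℝ) + k₁ * s ∧ aeval (-t) P = (k₀:ℝ) + k₁ * (-t) := by
    intro P k₀ k₁ hP
    rcases hαcase with hα | hα
    · exact transfer_both f₁ hmon hdeg s (-t) hsirr hfs hft α hα P k₀ k₁ hP
    · exact (transfer_both f₁ hmon hdeg (-t) s htirr hft hfs α hα P k₀ k₁ hP).symm
  have W1 : ∀ (P : Polynomial ℕ) (k : ℕ), aeval α P = (k : ℂ) → P = C k := by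
    intro P k hP
    obtain ⟨h1, h2⟩ := transfer2 P k 0 (by rw [hP]; push_cast; ring)
    exact poly_eq_C ht0 hts P k (by rw [h1]; push_cast; ring) (by rw [h2]; push_cast; ring)
  have W2 : ∀ (P : Polynomial ℕ) (k : ℕ), aeval α P = (k : ℂ) * α → P = C k * X := by
    intro P k hP
    obtain ⟨h1, h2⟩ := transfer2 P 0 k (by rw [hP]; push_cast; ring)
    exact poly_eq_X ht0 hts P k (by rw [h1]; push_cast; ring) (by rw [h2]; push_cast; ring)
  have NZ : ∀ p : Polynomial ℕ, aeval α p = 0 → p = 0 := by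
    intro p hp
    have := W1 p 0 (by rw [hp]; norm_num)
    simpa using this
  -- basic memberships
  have hconst : ∀ k : ℕ, ((k:ℂ)) ∈ Malpha α := by
    intro k
    exact mem_Malpha_iff.mpr ⟨C k, by simp⟩
  have hsmul : ∀ k : ℕ, (k:ℂ) * α ∈ Malpha α := by
    intro k
    exact mem_Malpha_iff.mpr ⟨C k * X, by simp⟩
  have hpowmem : ∀ m : ℕ, α ^ m ∈ Malpha α := by
    intro m
    exact mem_Malpha_iff.mpr ⟨X ^ m, by simp⟩
  have hsmulpow : ∀ k m : ℕ, (k:ℂ) * α ^ m ∈ Malpha α := by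
    intro k m
    exact mem_Malpha_iff.mpr ⟨C k * X ^ m, by simp⟩
  -- α is a nonzero real irrational
  obtain ⟨r, hrirr, hαr⟩ : ∃ r : ℝ, Irrational r ∧ α = (r : ℂ) := by
    rcases hαcase with hα | hα
    · exact ⟨s, hsirr, hα⟩
    · exact ⟨-t, htirr, hα⟩
  have hr0 : r ≠ 0 := hrirr.ne_zero
  have hα0 : α ≠ 0 := by
    rw [hαr]
    exact_mod_cast Complex.ofReal_ne_zero.mpr hr0
  have hαpow_ne : ∀ j : ℕ, α ^ (j + 2) ≠ α := by
    intro j h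
    rw [hαr] at h
    have hR : r ^ (j + 2) = r := by exact_mod_cast h
    have hpow1 : r ^ (j + 1) = 1 := by
      have : r ^ (j + 1) * r = 1 * r := by
        rw [← pow_succ, one_mul]
        exact hR
      exact mul_right_cancel₀ hr0 this
    have habs : |r| ^ (j + 1) = 1 := by
      rw [← abs_pow, hpow1, abs_one]
    have habs1 : |r| = 1 := by
      rcases lt_trichotomy |r| 1 with h | h | h
      · have := pow_lt_one₀ (abs_nonneg r) h (Nat.succ_ne_zero j)
        rw [habs] at this
        exact absurd this (lt_irrefl 1)
      · exact h
      · have := one_lt_pow₀ h (Nat.succ_ne_zero j)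
        rw [habs] at this
        exact absurd this (lt_irrefl 1)
    rcases abs_eq (by norm_num : (0:ℝ) ≤ 1) |>.mp habs1 with h | h
    · exact hrirr.ne_one h
    · exact hrirr.ne_int (-1) (by rw [h]; norm_num)
  -- 1 is an atom
  have h1mem : (1:ℂ) ∈ Malpha α := by simpa using hconst 1
  have h1atom : (1:ℂ) ∈ atomsM α := by
    refine ⟨h1mem, one_ne_zero, ?_⟩
    intro u v hu hv huv
    obtain ⟨p, hp⟩ := mem_Malpha_iff.mp hu
    obtain ⟨q, hq⟩ := mem_Malpha_iff.mp hv
    have hpq : aeval α (p + q) = ((1:ℕ) : ℂ) := by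
      rw [map_add, hp, hq, ← huv]; norm_num
    have hC := W1 (p + q) 1 hpq
    have hco : ∀ i, p.coeff i + q.coeff i = (C 1 : Polynomial ℕ).coeff i := by
      intro i
      rw [← coeff_add, hC]
    rcases Nat.eq_zero_or_pos (p.coeff 0) with h0 | h0
    · left
      have hp0 : p = 0 := by
        ext i
        rcases eq_or_ne i 0 with rfl | hi
        · simpa using h0
        · have := hco i
          rw [coeff_C, if_neg hi] at this
          simp only [coeff_zero]
          omega
      rw [← hp, hp0, map_zero]
    · right
      have hq0 : q = 0 := by
        ext i
        rcases eq_or_ne i 0 with rfl | hi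
        · have := hco 0
          rw [coeff_C, if_pos rfl] at this
          simp only [coeff_zero]
          omega
        · have := hco i
          rw [coeff_C, if_neg hi] at this
          simp only [coeff_zero]
          omega
      rw [← hq, hq0, map_zero]
  -- α is an atom
  have hαmem : α ∈ Malpha α := by simpa using hpowmem 1
  have hαatom : α ∈ atomsM α := by
    refine ⟨hαmem, hα0, ?_⟩
    intro u v hu hv huv
    obtain ⟨p, hp⟩ := mem_Malpha_iff.mp hu
    obtain ⟨q, hq⟩ := mem_Malpha_iff.mp hv
    have hpq : aeval α (p + q) = ((1:ℕ) : ℂ) * α := by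
      rw [map_add, hp, hq, ← huv]; norm_num
    have hC := W2 (p + q) 1 hpq
    have hco : ∀ i, p.coeff i + q.coeff i = (C 1 * X : Polynomial ℕ).coeff i := by
      intro i
      rw [← coeff_add, hC]
    rcases Nat.eq_zero_or_pos (p.coeff 1) with h0 | h0
    · left
      have hp0 : p = 0 := by
        ext i
        rcases eq_or_ne i 1 with rfl | hi
        · simpa using h0
        · have := hco i
          rw [coeff_C_mul, coeff_X, if_neg (Ne.symm hi)] at this
          simp only [coeff_zero]
          omega
      rw [← hp, hp0, map_zero]
    · right
      have hq0 : q = 0 := by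
        ext i
        rcases eq_or_ne i 1 with rfl | hi
        · have := hco 1
          rw [coeff_C_mul, coeff_X, if_pos rfl] at this
          simp only [coeff_zero]
          omega
        · have := hco i
          rw [coeff_C_mul, coeff_X, if_neg (Ne.symm hi)] at this
          simp only [coeff_zero]
          omega
      rw [← hq, hq0, map_zero]
  -- 1 is a strong atom
  have h1strong : (1:ℂ) ∈ strongAtomsM α := by
    refine ⟨h1atom, ?_⟩
    intro n hn ms hms hsum
    have hall : ∀ x ∈ ms, x = (1:ℂ) := by
      intro x hx
      obtain ⟨hxM, hx0, hxsplit⟩ := hms x hx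
      have hrest : (ms.erase x).sum ∈ Malpha α := by
        apply AddSubmonoid.multiset_sum_mem
        intro y hy
        exact (hms y (Multiset.mem_of_mem_erase hy)).1
      obtain ⟨p, hp⟩ := mem_Malpha_iff.mp hxM
      obtain ⟨q, hq⟩ := mem_Malpha_iff.mp hrest
      have hxr : x + (ms.erase x).sum = (n : ℂ) := by
        rw [← Multiset.sum_cons, Multiset.cons_erase hx, hsum]
        simp [nsmul_eq_mul]
      have hpq : aeval α (p + q) = ((n:ℕ) : ℂ) := by
        rw [map_add, hp, hq, hxr]
      have hC := W1 (p + q) n hpq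
      -- p is a constant
      have hpc : ∀ i, i ≠ 0 → p.coeff i = 0 := by
        intro i hi
        have : p.coeff i + q.coeff i = (C n : Polynomial ℕ).coeff i := by
          rw [← coeff_add, hC]
        rw [coeff_C, if_neg hi] at this
        omega
      have hpC : p = C (p.coeff 0) := by
        ext i
        rcases eq_or_ne i 0 with rfl | hi
        · simp
        · simp [coeff_C, hi, hpc i hi]
      have hxval : x = ((p.coeff 0 : ℕ) : ℂ) := by
        rw [← hp, hpC]
        simp
      set k := p.coeff 0 with hk
      have hk0 : k ≠ 0 := by
        intro h
        rw [h] at hxval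
        exact hx0 (by simpa using hxval)
      have hk1 : k = 1 := by
        by_contra hk1
        have hk2 : 2 ≤ k := by omega
        have hsplit := hxsplit 1 ((k - 1 : ℕ) : ℂ) h1mem (hconst (k-1)) ?_
        · rcases hsplit with h | h
          · exact one_ne_zero h
          · have : (k - 1 : ℕ) = 0 := by exact_mod_cast h
            omega
        · rw [hxval]
          have : ((k:ℕ) : ℂ) = ((1 + (k-1) : ℕ) : ℂ) := by
            congr 1
            omega
          rw [this]
          push_cast
          ring
      rw [hxval, hk1]
      norm_num
    have hrep : ms = Multiset.replicate (Multiset.card ms) 1 :=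
      Multiset.eq_replicate_card.mpr hall
    have hcard : Multiset.card ms = n := by
      have : ms.sum = (Multiset.card ms : ℂ) := by
        rw [hrep]
        simp [Multiset.sum_replicate]
      rw [hsum] at this
      have h2 : ((n:ℕ) : ℂ) = (Multiset.card ms : ℂ) := by
        rw [← this]
        simp [nsmul_eq_mul]
      exact_mod_cast h2.symm
    rw [hrep, hcard]
  -- α is a strong atom
  have hαstrong : α ∈ strongAtomsM α := by
    refine ⟨hαatom, ?_⟩
    intro n hn ms hms hsum
    have hall : ∀ x ∈ ms, x = α := by
      intro x hx
      obtain ⟨hxM, hx0, hxsplit⟩ := hms x hx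
      have hrest : (ms.erase x).sum ∈ Malpha α := by
        apply AddSubmonoid.multiset_sum_mem
        intro y hy
        exact (hms y (Multiset.mem_of_mem_erase hy)).1
      obtain ⟨p, hp⟩ := mem_Malpha_iff.mp hxM
      obtain ⟨q, hq⟩ := mem_Malpha_iff.mp hrest
      have hxr : x + (ms.erase x).sum = (n : ℂ) * α := by
        rw [← Multiset.sum_cons, Multiset.cons_erase hx, hsum]
        simp [nsmul_eq_mul]
      have hpq : aeval α (p + q) = ((n:ℕ) : ℂ) * α := by
        rw [map_add, hp, hq, hxr]
      have hC := W2 (p + q) n hpq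
      have hpc : ∀ i, i ≠ 1 → p.coeff i = 0 := by
        intro i hi
        have : p.coeff i + q.coeff i = (C n * X : Polynomial ℕ).coeff i := by
          rw [← coeff_add, hC]
        rw [coeff_C_mul, coeff_X, if_neg (Ne.symm hi)] at this
        omega
      have hpC : p = C (p.coeff 1) * X := by
        ext i
        rcases eq_or_ne i 1 with rfl | hi
        · simp
        · simp [coeff_C_mul, coeff_X, Ne.symm hi, hpc i hi]
      have hxval : x = ((p.coeff 1 : ℕ) : ℂ) * α := by
        rw [← hp, hpC]
        simp
      set k := p.coeff 1 with hk
      have hk0 : k ≠ 0 := by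
        intro h
        rw [h] at hxval
        exact hx0 (by simpa using hxval)
      have hk1 : k = 1 := by
        by_contra hk1
        have hk2 : 2 ≤ k := by omega
        have hne1 : ((k - 1 : ℕ) : ℂ) * α ≠ 0 := by
          apply mul_ne_zero ?_ hα0
          have : (k - 1 : ℕ) ≠ 0 := by omega
          exact_mod_cast Nat.cast_ne_zero.mpr this
        have hsplit := hxsplit α (((k - 1 : ℕ) : ℂ) * α) hαmem (hsmul (k-1)) ?_
        · rcases hsplit with h | h
          · exact hα0 h
          · exact hne1 h
        · rw [hxval]
          have : ((k:ℕ) : ℂ) = ((1 + (k-1) : ℕ) : ℂ) := by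
            congr 1
            omega
          rw [this]
          push_cast
          ring
      rw [hxval, hk1]
      norm_num
    have hrep : ms = Multiset.replicate (Multiset.card ms) α :=
      Multiset.eq_replicate_card.mpr hall
    have hcard : Multiset.card ms = n := by
      have h1 : ms.sum = (Multiset.card ms : ℂ) * α := by
        rw [hrep]
        simp [Multiset.sum_replicate, nsmul_eq_mul]
      rw [hsum] at h1
      have h2 : ((n:ℕ) : ℂ) * α = (Multiset.card ms : ℂ) * α := by
        rw [← h1]
        simp [nsmul_eq_mul]
      have h3 : ((n:ℕ) : ℂ) = (Multiset.card ms : ℂ) := mul_right_cancel₀ hα0 h2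
      exact_mod_cast h3.symm
    rw [hrep, hcard]
  -- the powers decomposition for m ≥ 2
  have UV : ∀ j : ℕ, ∃ U V : ℕ, 0 < U ∧ 0 < V ∧
      ((a:ℂ)) ^ (j + 1) * α ^ (j + 2) = (U : ℂ) + (V : ℂ) * α := by
    intro j
    induction j with
    | zero =>
      refine ⟨c, b, hc, hb, ?_⟩
      push_cast
      linear_combination hroot
    | succ j ih =>
      obtain ⟨U, V, hU, hV, hUV⟩ := ih
      refine ⟨c * V, a * U + b * V, Nat.mul_pos hc hV, ?_, ?_⟩
      · have := Nat.mul_pos ha hU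
        omega
      · push_cast
        linear_combination ((a:ℂ) * α) * hUV + (V:ℂ) * hroot
  -- main set equality
  apply Set.Subset.antisymm
  · -- strong atoms ⊆ {1, α}
    intro x hx
    obtain ⟨⟨hxM, hx0, hxsplit⟩, hxstrong⟩ := hx
    obtain ⟨p, hp⟩ := mem_Malpha_iff.mp hxM
    have hpne : p ≠ 0 := by
      intro h
      rw [h, map_zero] at hp
      exact hx0 hp.symm
    obtain ⟨m, hm⟩ := Finset.nonempty_of_ne_empty (by
      intro h
      exact hpne (Polynomial.support_eq_empty.mp h))
    -- x = coeff * α^m for the unique term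
    have hsplit1 := hxsplit (aeval α (monomial m (p.coeff m))) (aeval α (p.erase m))
      (mem_Malpha_iff.mpr ⟨_, rfl⟩) (mem_Malpha_iff.mpr ⟨_, rfl⟩)
      (by rw [← map_add, Polynomial.monomial_add_erase, hp])
    have hmono_ne : aeval α (monomial m (p.coeff m)) ≠ 0 := by
      intro h
      have := NZ _ h
      rw [Polynomial.monomial_eq_zero_iff] at this
      exact (Polynomial.mem_support_iff.mp hm) this
    have herase0 : p.erase m = 0 := by
      rcases hsplit1 with h | h
      · exact absurd h hmono_ne
      · exact NZ _ h
    have hpmono : p = monomial m (p.coeff m) := by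
      conv_lhs => rw [← Polynomial.monomial_add_erase p m]
      rw [herase0, add_zero]
    have hxval : x = ((p.coeff m : ℕ) : ℂ) * α ^ m := by
      rw [← hp, hpmono]
      simp [aeval_monomial]
    set k := p.coeff m with hkdef
    have hk0 : k ≠ 0 := Polynomial.mem_support_iff.mp hm
    have hk1 : k = 1 := by
      by_contra hk1
      have hk2 : 2 ≤ k := by omega
      have hαm0 : α ^ m ≠ 0 := pow_ne_zero m hα0
      have hne1 : ((k - 1 : ℕ) : ℂ) * α ^ m ≠ 0 := by
        apply mul_ne_zero ?_ hαm0
        have : (k - 1 : ℕ) ≠ 0 := by omega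
        exact_mod_cast Nat.cast_ne_zero.mpr this
      have hsplit2 := hxsplit (α ^ m) (((k - 1 : ℕ) : ℂ) * α ^ m) (hpowmem m) (hsmulpow (k-1) m) ?_
      · rcases hsplit2 with h | h
        · exact hαm0 h
        · exact hne1 h
      · rw [hxval]
        have : ((k:ℕ) : ℂ) = ((1 + (k-1) : ℕ) : ℂ) := by
          congr 1
          omega
        rw [this]
        push_cast
        ring
    have hxpow : x = α ^ m := by
      rw [hxval, hk1]
      norm_num
    -- m must be 0 or 1
    match m, hxpow with
    | 0, hxpow => left; simpa using hxpow
    | 1, hxpow => right; simpa using hxpow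
    | (j + 2), hxpow =>
      exfalso
      obtain ⟨U, V, hU, hV, hUV⟩ := UV j
      have hnpos : 0 < a ^ (j + 1) := pow_pos ha _
      set ms : Multiset ℂ := Multiset.replicate U (1:ℂ) + Multiset.replicate V α with hms
      have hmsatoms : ∀ y ∈ ms, y ∈ atomsM α := by
        intro y hy
        rw [hms, Multiset.mem_add] at hy
        rcases hy with hy | hy
        · rw [Multiset.eq_of_mem_replicate hy]; exact h1atom
        · rw [Multiset.eq_of_mem_replicate hy]; exact hαatom
      have hmssum : ms.sum = (a ^ (j + 1) : ℕ) • x := by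
        rw [hms, Multiset.sum_add, Multiset.sum_replicate, Multiset.sum_replicate]
        rw [hxpow, nsmul_eq_mul, nsmul_eq_mul, nsmul_eq_mul]
        push_cast
        linear_combination -hUV
      have hreplic := hxstrong (a ^ (j + 1)) hnpos ms hmsatoms hmssum
      have hαin : α ∈ ms := by
        rw [hms, Multiset.mem_add]
        right
        exact Multiset.mem_replicate.mpr ⟨by omega, rfl⟩
      rw [hreplic] at hαin
      have := Multiset.eq_of_mem_replicate hαin
      rw [hxpow] at this
      exact hαpow_ne j this.symm
  · -- {1, α} ⊆ strong atoms
    intro x hx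
    rcases hx with hx | hx
    · rw [hx]; exact h1strong
    · rw [Set.mem_singleton_iff.mp hx]; exact hαstrong
end

section
/- Let α be an algebraic number whose minimal polynomial m over ℚ is a monic polynomial with integer coefficients satisfying Eisenstein's criterion at some prime p (i.e., p divides every non-leading coefficient of m, and p² does not divide the constant coefficient of m). Then for every k ∈ ℕ, the polynomial m(x^k) is irreducible in ℚ[x], and every root β of m(x^k) satisfies, as extended natural numbers, |A(M_β)| = k·|A(M_α)| and |S(M_β)| = k·|S(M_α)|. -/
open Polynomial

lemma mem_Malpha_iff_s14 {α x : ℂ} :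
    x ∈ Malpha α ↔ ∃ E : Multiset ℕ, (E.map (fun n => α ^ n)).sum = x := by
  constructor
  · intro hx
    obtain ⟨l, hl, hs⟩ := AddSubmonoid.exists_multiset_of_mem_closure hx
    subst hs
    clear hx
    induction l using Multiset.induction with
    | empty => exact ⟨0, by simp⟩
    | cons a l ih =>
      obtain ⟨E, hE⟩ := ih (fun y hy => hl y (Multiset.mem_cons_of_mem hy))
      obtain ⟨n, hn⟩ := hl a (Multiset.mem_cons_self a l)
      exact ⟨n ::ₘ E, by simp [hn, hE]⟩
  · rintro ⟨E, rfl⟩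
    induction E using Multiset.induction with
    | empty => exact AddSubmonoid.zero_mem _
    | cons a E ih =>
      simp only [Multiset.map_cons, Multiset.sum_cons]
      exact AddSubmonoid.add_mem _ (AddSubmonoid.subset_closure ⟨a, rfl⟩) ih

lemma sum_pow_eq_aeval (α : ℂ) (E : Multiset ℕ) :
    (E.map (fun n => α ^ n)).sum = aeval α ((E.map (fun n => (X : ℚ[X]) ^ n)).sum) := by
  rw [map_multiset_sum, Multiset.map_map]
  simp [Function.comp]

lemma Malpha_mem_span {α x : ℂ} (hx : x ∈ Malpha α) : ∃ q : ℚ[X], aeval α q = x := by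
  obtain ⟨E, rfl⟩ := mem_Malpha_iff_s14.1 hx
  exact ⟨_, (sum_pow_eq_aeval α E).symm⟩

section Conj

open Classical in
/-- transfer function between the monoids of two conjugate algebraic numbers -/
noncomputable def cf (α₁ α₂ : ℂ) (x : ℂ) : ℂ :=
  if h : ∃ E : Multiset ℕ, (E.map (fun n => α₁ ^ n)).sum = x then
    (h.choose.map (fun n => α₂ ^ n)).sum else 0

variable {α₁ α₂ : ℂ}

/-- transfer of vanishing of rational polynomials -/
def TransRel (α₁ α₂ : ℂ) : Prop := ∀ q : ℚ[X], aeval α₁ q = 0 → aeval α₂ q = 0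

lemma transRel_of_minpoly_eq (h : minpoly ℚ α₁ = minpoly ℚ α₂) (h₁ : IsIntegral ℚ α₁) :
    TransRel α₁ α₂ := by
  intro q hq
  have hd : minpoly ℚ α₁ ∣ q := minpoly.dvd ℚ α₁ hq
  obtain ⟨r, rfl⟩ := hd
  rw [map_mul, h, minpoly.aeval, zero_mul]

lemma trans_sum (hT : TransRel α₁ α₂) (E F : Multiset ℕ)
    (h : (E.map (fun n => α₁ ^ n)).sum = (F.map (fun n => α₁ ^ n)).sum) :
    (E.map (fun n => α₂ ^ n)).sum = (F.map (fun n => α₂ ^ n)).sum := by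
  have h0 : aeval α₁ ((E.map (fun n => (X : ℚ[X]) ^ n)).sum - (F.map (fun n => (X : ℚ[X]) ^ n)).sum) = 0 := by
    rw [map_sub, sub_eq_zero, ← sum_pow_eq_aeval, ← sum_pow_eq_aeval]; exact h
  have h2 := hT _ h0
  rw [map_sub, sub_eq_zero, ← sum_pow_eq_aeval, ← sum_pow_eq_aeval] at h2
  exact h2

lemma cf_eq (hT : TransRel α₁ α₂) {x : ℂ} {E : Multiset ℕ}
    (hE : (E.map (fun n => α₁ ^ n)).sum = x) :
    cf α₁ α₂ x = (E.map (fun n => α₂ ^ n)).sum := by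
  have h : ∃ E' : Multiset ℕ, (E'.map (fun n => α₁ ^ n)).sum = x := ⟨E, hE⟩
  rw [cf, dif_pos h]
  exact trans_sum hT _ _ (h.choose_spec.trans hE.symm)

lemma cf_mem (hT : TransRel α₁ α₂) {x : ℂ} (hx : x ∈ Malpha α₁) : cf α₁ α₂ x ∈ Malpha α₂ := by
  obtain ⟨E, hE⟩ := mem_Malpha_iff_s14.1 hx
  rw [cf_eq hT hE]
  exact mem_Malpha_iff_s14.2 ⟨E, rfl⟩

lemma cf_zero (hT : TransRel α₁ α₂) : cf α₁ α₂ 0 = 0 := by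
  have : ((0 : Multiset ℕ).map (fun n => α₁ ^ n)).sum = (0 : ℂ) := by simp
  rw [cf_eq hT this]; simp

lemma cf_add (hT : TransRel α₁ α₂) {x y : ℂ} (hx : x ∈ Malpha α₁) (hy : y ∈ Malpha α₁) :
    cf α₁ α₂ (x + y) = cf α₁ α₂ x + cf α₁ α₂ y := by
  obtain ⟨E, hE⟩ := mem_Malpha_iff_s14.1 hx
  obtain ⟨F, hF⟩ := mem_Malpha_iff_s14.1 hy
  have hEF : ((E + F).map (fun n => α₁ ^ n)).sum = x + y := by
    rw [Multiset.map_add, Multiset.sum_add, hE, hF]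
  rw [cf_eq hT hEF, cf_eq hT hE, cf_eq hT hF, Multiset.map_add, Multiset.sum_add]

lemma cf_cf (hT : TransRel α₁ α₂) (hT' : TransRel α₂ α₁) {x : ℂ} (hx : x ∈ Malpha α₁) :
    cf α₂ α₁ (cf α₁ α₂ x) = x := by
  obtain ⟨E, hE⟩ := mem_Malpha_iff_s14.1 hx
  rw [cf_eq hT hE, cf_eq hT' rfl, hE]

lemma cf_ne_zero (hT : TransRel α₁ α₂) (hT' : TransRel α₂ α₁) {x : ℂ}
    (hx : x ∈ Malpha α₁) (hx0 : x ≠ 0) : cf α₁ α₂ x ≠ 0 := by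
  intro h
  apply hx0
  rw [← cf_cf hT hT' hx, h, cf_zero hT']

lemma cf_atom (hT : TransRel α₁ α₂) (hT' : TransRel α₂ α₁) {a : ℂ} (ha : a ∈ atomsM α₁) :
    cf α₁ α₂ a ∈ atomsM α₂ := by
  obtain ⟨haM, ha0, hdec⟩ := ha
  refine ⟨cf_mem hT haM, cf_ne_zero hT hT' haM ha0, ?_⟩
  intro u v hu hv huv
  have hu' : cf α₂ α₁ u ∈ Malpha α₁ := cf_mem hT' hu
  have hv' : cf α₂ α₁ v ∈ Malpha α₁ := cf_mem hT' hv
  have : a = cf α₂ α₁ u + cf α₂ α₁ v := by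
    rw [← cf_add hT' hu hv, ← huv, cf_cf hT hT' haM]
  rcases hdec _ _ hu' hv' this with h | h
  · left
    rw [← cf_cf hT' hT hu, h, cf_zero hT]
  · right
    rw [← cf_cf hT' hT hv, h, cf_zero hT]

lemma atoms_eq_image (hT : TransRel α₁ α₂) (hT' : TransRel α₂ α₁) :
    atomsM α₂ = cf α₁ α₂ '' atomsM α₁ := by
  ext b
  constructor
  · intro hb
    exact ⟨cf α₂ α₁ b, cf_atom hT' hT hb, cf_cf hT' hT hb.1⟩
  · rintro ⟨a, ha, rfl⟩
    exact cf_atom hT hT' ha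

lemma encard_atoms_eq (hT : TransRel α₁ α₂) (hT' : TransRel α₂ α₁) :
    (atomsM α₂).encard = (atomsM α₁).encard := by
  rw [atoms_eq_image hT hT']
  apply Set.InjOn.encard_image
  intro x hx y hy hxy
  rw [← cf_cf hT hT' hx.1, hxy, cf_cf hT hT' hy.1]

lemma Malpha_multiset_sum {α : ℂ} {s : Multiset ℂ} (h : ∀ x ∈ s, x ∈ Malpha α) :
    s.sum ∈ Malpha α := by
  induction s using Multiset.induction with
  | empty => exact AddSubmonoid.zero_mem _
  | cons a s ih =>
    rw [Multiset.sum_cons]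
    exact AddSubmonoid.add_mem _ (h a (Multiset.mem_cons_self a s))
      (ih fun x hx => h x (Multiset.mem_cons_of_mem hx))

lemma cf_msum (hT : TransRel α₁ α₂) {s : Multiset ℂ} (h : ∀ x ∈ s, x ∈ Malpha α₁) :
    cf α₁ α₂ s.sum = (s.map (cf α₁ α₂)).sum := by
  induction s using Multiset.induction with
  | empty => simpa using cf_zero hT
  | cons a s ih =>
    rw [Multiset.sum_cons, Multiset.map_cons, Multiset.sum_cons,
      cf_add hT (h a (Multiset.mem_cons_self a s))
        (Malpha_multiset_sum fun x hx => h x (Multiset.mem_cons_of_mem hx)),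
      ih fun x hx => h x (Multiset.mem_cons_of_mem hx)]

lemma cf_nsmul (hT : TransRel α₁ α₂) {x : ℂ} (hx : x ∈ Malpha α₁) (n : ℕ) :
    cf α₁ α₂ (n • x) = n • cf α₁ α₂ x := by
  induction n with
  | zero => simpa using cf_zero hT
  | succ n ih =>
    rw [succ_nsmul, succ_nsmul, cf_add hT (AddSubmonoid.nsmul_mem _ hx n) hx, ih]

lemma cf_strongAtom (hT : TransRel α₁ α₂) (hT' : TransRel α₂ α₁) {a : ℂ}
    (ha : a ∈ strongAtomsM α₁) : cf α₁ α₂ a ∈ strongAtomsM α₂ := by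
  obtain ⟨haAtom, hstrong⟩ := ha
  refine ⟨cf_atom hT hT' haAtom, ?_⟩
  intro n hn s hs hsum
  have hsM : ∀ x ∈ s, x ∈ Malpha α₂ := fun x hx => (hs x hx).1
  have hs' : ∀ b ∈ s.map (cf α₂ α₁), b ∈ atomsM α₁ := by
    intro b hb
    obtain ⟨x, hx, rfl⟩ := Multiset.mem_map.1 hb
    exact cf_atom hT' hT (hs x hx)
  have hsum' : (s.map (cf α₂ α₁)).sum = n • a := by
    rw [← cf_msum hT' hsM, hsum, cf_nsmul hT' (cf_mem hT haAtom.1) n,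
      cf_cf hT hT' haAtom.1]
  have hrep := hstrong n hn _ hs' hsum'
  have h2 : s.map (cf α₁ α₂ ∘ cf α₂ α₁) = s := by
    conv_rhs => rw [← Multiset.map_id s]
    exact Multiset.map_congr rfl fun x hx => cf_cf hT' hT (hsM x hx)
  rw [← h2, ← Multiset.map_map, hrep, Multiset.map_replicate]

lemma strongAtoms_eq_image (hT : TransRel α₁ α₂) (hT' : TransRel α₂ α₁) :
    strongAtomsM α₂ = cf α₁ α₂ '' strongAtomsM α₁ := by
  ext b
  constructor
  · intro hb
    exact ⟨cf α₂ α₁ b, cf_strongAtom hT' hT hb, cf_cf hT' hT hb.1.1⟩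
  · rintro ⟨a, ha, rfl⟩
    exact cf_strongAtom hT hT' ha

lemma encard_strongAtoms_eq (hT : TransRel α₁ α₂) (hT' : TransRel α₂ α₁) :
    (strongAtomsM α₂).encard = (strongAtomsM α₁).encard := by
  rw [strongAtoms_eq_image hT hT']
  apply Set.InjOn.encard_image
  intro x hx y hy hxy
  rw [← cf_cf hT hT' hx.1.1, hxy, cf_cf hT hT' hy.1.1]

end Conj

section Sections

/-- the `r`-th section of a polynomial with respect to decomposition along residues mod `k` -/
noncomputable def psec (k r : ℕ) (Q : ℚ[X]) : ℚ[X] :=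
  ∑ i ∈ Finset.range (Q.natDegree + 1), C (Q.coeff (k * i + r)) * X ^ i

lemma psec_coeff {k : ℕ} (hk : 0 < k) (r : ℕ) (Q : ℚ[X]) (i : ℕ) :
    (psec k r Q).coeff i = Q.coeff (k * i + r) := by
  rw [psec, finset_sum_coeff]
  by_cases hi : i < Q.natDegree + 1
  · rw [Finset.sum_eq_single_of_mem i (Finset.mem_range.2 hi)]
    · rw [coeff_C_mul, coeff_X_pow, if_pos rfl, mul_one]
    · intro j _ hji
      rw [coeff_C_mul, coeff_X_pow, if_neg (fun h => hji h.symm), mul_zero]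
  · push_neg at hi
    have h1 : ∀ j ∈ Finset.range (Q.natDegree + 1), (C (Q.coeff (k * j + r)) * X ^ j).coeff i = 0 := by
      intro j hj
      have : j ≠ i := by
        have := Finset.mem_range.1 hj; omega
      rw [coeff_C_mul, coeff_X_pow, if_neg (fun h => this h.symm), mul_zero]
    rw [Finset.sum_eq_zero h1]
    have : Q.natDegree < k * i + r := by
      have : i ≤ k * i := Nat.le_mul_of_pos_left i hk
      omega
    exact (coeff_eq_zero_of_natDegree_lt this).symm

lemma coeff_expand_mul_X_pow {k : ℕ} (hk : 0 < k) {j r : ℕ} (hj : j < k) (hr : r < k)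
    (a : ℚ[X]) (i : ℕ) :
    (expand ℚ k a * X ^ j).coeff (k * i + r) = if j = r then a.coeff i else 0 := by
  rw [coeff_mul_X_pow']
  by_cases hjr : j = r
  · subst hjr
    rw [if_pos (Nat.le_add_left _ _), if_pos rfl, Nat.add_sub_cancel, coeff_expand hk,
      if_pos (Dvd.intro _ rfl), Nat.mul_div_cancel_left _ hk]
  · rw [if_neg hjr]
    split_ifs with hle
    · rw [coeff_expand hk, if_neg]
      intro hdvd
      obtain ⟨c, hc⟩ := hdvd
      rcases lt_or_gt_of_ne hjr with h | h
      · -- j < r : k*i + r - j = k*i + (r - j)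
        have hd : k ∣ (r - j) := by
          have h2 : k * i + r - j = k * i + (r - j) := by omega
          rw [h2] at hc
          have : k ∣ k * i + (r - j) := ⟨c, hc⟩
          exact (Nat.dvd_add_right ⟨i, rfl⟩).1 this
        have := Nat.le_of_dvd (by omega) hd
        omega
      · -- r < j
        have h2 : k * i + r - j = k * i - (j - r) := by omega
        rw [h2] at hc
        have h3 : j - r ≤ k * i := by omega
        have hd : k ∣ (j - r) := by
          have h4 : k ∣ k * i - (j - r) := ⟨c, hc⟩
          have h5 := Nat.dvd_sub (Dvd.intro i rfl) h4
          rwa [Nat.sub_sub_self h3] at h5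
        have := Nat.le_of_dvd (by omega) hd
        omega
    · rfl

lemma psec_sum {k : ℕ} (hk : 0 < k) (q : ℕ → ℚ[X]) {r : ℕ} (hr : r < k) :
    psec k r (∑ j ∈ Finset.range k, expand ℚ k (q j) * X ^ j) = q r := by
  ext i
  rw [psec_coeff hk, finset_sum_coeff,
    Finset.sum_eq_single_of_mem r (Finset.mem_range.2 hr)]
  · rw [coeff_expand_mul_X_pow hk hr hr, if_pos rfl]
  · intro j hj hjr
    rw [coeff_expand_mul_X_pow hk (Finset.mem_range.1 hj) hr, if_neg hjr]

lemma psec_reconstruct {k : ℕ} (hk : 0 < k) (P : ℚ[X]) :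
    ∑ r ∈ Finset.range k, expand ℚ k (psec k r P) * X ^ r = P := by
  ext n
  rw [finset_sum_coeff]
  have hdm := Nat.div_add_mod n k
  have hmlt : n % k < k := Nat.mod_lt n hk
  rw [Finset.sum_eq_single_of_mem (n % k) (Finset.mem_range.2 hmlt)]
  · have h1 : n - n % k = k * (n / k) := by omega
    rw [coeff_mul_X_pow', if_pos (Nat.mod_le n k), h1, coeff_expand hk,
      if_pos (Dvd.intro _ rfl), Nat.mul_div_cancel_left _ hk, psec_coeff hk, hdm]
  · intro r hr hrne
    rw [coeff_mul_X_pow']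
    split_ifs with hle
    · rw [coeff_expand hk, if_neg]
      intro ⟨c, hc⟩
      have hrk := Finset.mem_range.1 hr
      have hn : n = k * c + r := by omega
      apply hrne
      rw [hn, Nat.mul_add_mod, Nat.mod_eq_of_lt hrk]
    · rfl

end Sections

section IND

variable {k : ℕ} {β : ℂ} {mq : ℚ[X]}

lemma IND_poly (hk : 0 < k) (hmq : aeval (β ^ k) mq = 0)
    (hmβ : minpoly ℚ β = expand ℚ k mq)
    (q : ℕ → ℚ[X]) (h : ∑ r ∈ Finset.range k, β ^ r * aeval (β ^ k) (q r) = 0) :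
    ∀ r < k, aeval (β ^ k) (q r) = 0 := by
  set Q := ∑ j ∈ Finset.range k, expand ℚ k (q j) * X ^ j with hQdef
  have hQ : aeval β Q = 0 := by
    rw [hQdef, map_sum, ← h]
    refine Finset.sum_congr rfl fun j _ => ?_
    rw [map_mul, expand_aeval, aeval_X_pow, mul_comm]
  obtain ⟨R, hR⟩ := minpoly.dvd ℚ β hQ
  intro r hr
  have hQr : psec k r Q = q r := psec_sum hk q hr
  have hsplit : Q = ∑ j ∈ Finset.range k, expand ℚ k (mq * psec k j R) * X ^ j := by
    rw [hR, hmβ]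
    conv_lhs => rw [← psec_reconstruct hk R]
    rw [Finset.mul_sum]
    refine Finset.sum_congr rfl fun j _ => ?_
    rw [map_mul, mul_assoc]
  have hqr : q r = mq * psec k r R := by rw [← hQr, hsplit, psec_sum hk _ hr]
  rw [hqr, map_mul, hmq, zero_mul]

lemma IND_sem (hk : 0 < k) (hmq : aeval (β ^ k) mq = 0)
    (hmβ : minpoly ℚ β = expand ℚ k mq)
    (x y : ℕ → ℂ)
    (hx : ∀ r, ∃ q : ℚ[X], aeval (β ^ k) q = x r)
    (hy : ∀ r, ∃ q : ℚ[X], aeval (β ^ k) q = y r)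
    (h : ∑ r ∈ Finset.range k, β ^ r * x r = ∑ r ∈ Finset.range k, β ^ r * y r) :
    ∀ r < k, x r = y r := by
  choose qx hqx using hx
  choose qy hqy using hy
  have h0 : ∑ r ∈ Finset.range k, β ^ r * aeval (β ^ k) (qx r - qy r) = 0 := by
    have : ∀ r, β ^ r * aeval (β ^ k) (qx r - qy r) = β ^ r * x r - β ^ r * y r := by
      intro r; rw [map_sub, hqx, hqy, mul_sub]
    rw [Finset.sum_congr rfl fun r _ => this r, Finset.sum_sub_distrib, h, sub_self]
  intro r hr
  have := IND_poly hk hmq hmβ _ h0 r hr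
  rw [map_sub, hqx, hqy, sub_eq_zero] at this
  exact this

end IND

section Group

lemma sum_map_filter_range {A : Type*} (k : ℕ) (s : Multiset A) (f : A → ℂ) (R : A → ℕ)
    (hR : ∀ a ∈ s, R a < k) :
    (s.map f).sum = ∑ r ∈ Finset.range k, ((s.filter (fun a => R a = r)).map f).sum := by
  induction s using Multiset.induction with
  | empty => simp
  | cons a s ih =>
    have hstep : ∀ r, ((Multiset.filter (fun x => R x = r) (a ::ₘ s)).map f).sum
        = (if R a = r then f a else 0) + ((Multiset.filter (fun x => R x = r) s).map f).sum := by
      intro r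
      rw [Multiset.filter_cons]
      split_ifs with h
      · simp
      · simp
    rw [Multiset.map_cons, Multiset.sum_cons,
      Finset.sum_congr rfl (fun r _ => hstep r), Finset.sum_add_distrib,
      ih (fun x hx => hR x (Multiset.mem_cons_of_mem hx))]
    congr 1
    have : ∀ r ∈ Finset.range k, (if R a = r then f a else 0) = (if r = R a then f a else 0) := by
      intro r _; by_cases h : R a = r
      · rw [if_pos h, if_pos h.symm]
      · rw [if_neg h, if_neg (fun h' => h h'.symm)]
    rw [Finset.sum_congr rfl this, Finset.sum_ite_eq' (Finset.range k) (R a) (fun _ => f a),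
      if_pos (Finset.mem_range.2 (hR a (Multiset.mem_cons_self a s)))]

variable {k : ℕ} {β : ℂ}

lemma beta_decomp (hk : 0 < k) (E : Multiset ℕ) :
    (E.map (fun n => β ^ n)).sum
      = ∑ r ∈ Finset.range k,
          β ^ r * ((E.filter (fun n => n % k = r)).map (fun n => (β ^ k) ^ (n / k))).sum := by
  rw [sum_map_filter_range k E _ (fun n => n % k) (fun n _ => Nat.mod_lt n hk)]
  refine Finset.sum_congr rfl fun r _ => ?_
  rw [← Multiset.sum_map_mul_left]
  congr 1
  refine Multiset.map_congr rfl ?_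
  intro n hn
  have hmod : n % k = r := by
    have := Multiset.mem_filter.1 hn
    simpa using this.2
  have hn' : n = k * (n / k) + r := by rw [← hmod]; exact (Nat.div_add_mod n k).symm
  calc β ^ n = β ^ (k * (n / k) + r) := by rw [← hn']
  _ = β ^ r * (β ^ k) ^ (n / k) := by rw [pow_add, ← pow_mul, mul_comm]

lemma filter_comp_mem (E : Multiset ℕ) (r : ℕ) :
    ((E.filter (fun n => n % k = r)).map (fun n => (β ^ k) ^ (n / k))).sum ∈ Malpha (β ^ k) := by
  refine mem_Malpha_iff_s14.2 ⟨(E.filter (fun n => n % k = r)).map (fun n => n / k), ?_⟩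
  rw [Multiset.map_map]
  rfl

lemma pow_mul_mem {x : ℂ} (hx : x ∈ Malpha (β ^ k)) (r : ℕ) : β ^ r * x ∈ Malpha β := by
  obtain ⟨E, rfl⟩ := mem_Malpha_iff_s14.1 hx
  refine mem_Malpha_iff_s14.2 ⟨E.map (fun n => k * n + r), ?_⟩
  rw [Multiset.map_map, ← Multiset.sum_map_mul_left]
  refine congrArg Multiset.sum (Multiset.map_congr rfl ?_)
  intro n _
  show β ^ (k * n + r) = β ^ r * (β ^ k) ^ n
  rw [pow_add, ← pow_mul, mul_comm]

lemma Malpha_pow_le : Malpha (β ^ k) ≤ Malpha β := by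
  apply AddSubmonoid.closure_le.2
  rintro x ⟨n, rfl⟩
  exact AddSubmonoid.subset_closure ⟨k * n, by simp [pow_mul]⟩

end Group

/-- reducedness of the monoid -/
def RedM (δ : ℂ) : Prop := ∀ x ∈ Malpha δ, -x ∈ Malpha δ → x = 0

lemma atoms_empty_of_unit {δ u : ℂ} (hu : u ∈ Malpha δ) (hmu : -u ∈ Malpha δ) (hu0 : u ≠ 0) :
    atomsM δ = ∅ := by
  ext a
  simp only [Set.mem_empty_iff_false, iff_false]
  rintro ⟨haM, ha0, hsp⟩
  by_cases h : a = -u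
  · have h1 : a = (a + a) + (-a) := by ring
    have h2 : -a ∈ Malpha δ := by rw [h, neg_neg]; exact hu
    rcases hsp _ _ (AddSubmonoid.add_mem _ haM haM) h2 h1 with h3 | h3
    · exact ha0 (add_self_eq_zero.1 h3)
    · exact ha0 (by rw [← neg_neg a, h3, neg_zero])
  · have h1 : a = (a + u) + (-u) := by ring
    rcases hsp _ _ (AddSubmonoid.add_mem _ haM hu) hmu h1 with h3 | h3
    · exact h (by linear_combination (norm := ring_nf) h3)
    · exact hu0 (by rw [← neg_neg u, h3, neg_zero])

lemma zero_sum_empty {δ : ℂ} (hred : RedM δ) {s : Multiset ℂ}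
    (hs : ∀ x ∈ s, x ∈ Malpha δ ∧ x ≠ 0) (hsum : s.sum = 0) : s = 0 := by
  induction s using Multiset.induction with
  | empty => rfl
  | cons a s ih =>
    exfalso
    rw [Multiset.sum_cons] at hsum
    have haM := (hs a (Multiset.mem_cons_self a s)).1
    have hsM : s.sum ∈ Malpha δ :=
      Malpha_multiset_sum fun x hx => (hs x (Multiset.mem_cons_of_mem hx)).1
    have hna : -a ∈ Malpha δ := by
      rw [neg_eq_of_add_eq_zero_right hsum]; exact hsM
    exact (hs a (Multiset.mem_cons_self a s)).2 (hred a haM hna)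

section Beta

variable {k : ℕ} {β : ℂ} {mq : ℚ[X]}

lemma rep_unique (hk : 0 < k) (hmq : aeval (β ^ k) mq = 0)
    (hmβ : minpoly ℚ β = expand ℚ k mq) {r s : ℕ} (hr : r < k) (hs : s < k) {b b' : ℂ}
    (hb : b ∈ Malpha (β ^ k)) (hb' : b' ∈ Malpha (β ^ k)) (hbne : b ≠ 0)
    (h : β ^ r * b = β ^ s * b') : r = s ∧ b = b' := by
  have hx : ∀ t : ℕ, ∃ q : ℚ[X], aeval (β ^ k) q = (if t = r then b else 0) := by
    intro t
    by_cases ht : t = r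
    · obtain ⟨q, hq⟩ := Malpha_mem_span hb
      exact ⟨q, by rw [if_pos ht, hq]⟩
    · exact ⟨0, by rw [if_neg ht, map_zero]⟩
  have hy : ∀ t : ℕ, ∃ q : ℚ[X], aeval (β ^ k) q = (if t = s then b' else 0) := by
    intro t
    by_cases ht : t = s
    · obtain ⟨q, hq⟩ := Malpha_mem_span hb'
      exact ⟨q, by rw [if_pos ht, hq]⟩
    · exact ⟨0, by rw [if_neg ht, map_zero]⟩
  have hsum : ∑ t ∈ Finset.range k, β ^ t * (if t = r then b else 0)
      = ∑ t ∈ Finset.range k, β ^ t * (if t = s then b' else 0) := by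
    have e1 : ∀ t, β ^ t * (if t = r then b else 0) = (if t = r then β ^ t * b else 0) := by
      intro t; split_ifs <;> simp
    have e2 : ∀ t, β ^ t * (if t = s then b' else 0) = (if t = s then β ^ t * b' else 0) := by
      intro t; split_ifs <;> simp
    rw [Finset.sum_congr rfl (fun t _ => e1 t), Finset.sum_congr rfl (fun t _ => e2 t),
      Finset.sum_ite_eq' _ r _, Finset.sum_ite_eq' _ s _,
      if_pos (Finset.mem_range.2 hr), if_pos (Finset.mem_range.2 hs), h]
  have := IND_sem hk hmq hmβ _ _ hx hy hsum r hr
  rw [if_pos rfl] at this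
  by_cases hrs : r = s
  · rw [if_pos hrs] at this
    exact ⟨hrs, this⟩
  · rw [if_neg hrs] at this
    exact absurd this hbne

end Beta

section Beta2

variable {k : ℕ} {β : ℂ} {mq : ℚ[X]}

lemma atom_beta_decomp (hk : 0 < k) (hβ0 : β ≠ 0)
    (hmq : aeval (β ^ k) mq = 0) (hmβ : minpoly ℚ β = expand ℚ k mq)
    {a : ℂ} (ha : a ∈ atomsM β) :
    ∃ r, r < k ∧ ∃ b ∈ atomsM (β ^ k), a = β ^ r * b := by
  obtain ⟨haM, ha0, hsp⟩ := ha
  obtain ⟨E, hE⟩ := mem_Malpha_iff_s14.1 haM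
  set x : ℕ → ℂ :=
    fun r => ((E.filter (fun n => n % k = r)).map (fun n => (β ^ k) ^ (n / k))).sum with hxdef
  have hdecomp : a = ∑ r ∈ Finset.range k, β ^ r * x r := by rw [← hE]; exact beta_decomp hk E
  have hxM : ∀ r, x r ∈ Malpha (β ^ k) := fun r => filter_comp_mem E r
  have hex : ∃ r, r < k ∧ x r ≠ 0 := by
    by_contra hcon
    push_neg at hcon
    apply ha0
    rw [hdecomp]
    refine Finset.sum_eq_zero fun r hr => ?_
    rw [hcon r (Finset.mem_range.1 hr), mul_zero]
  obtain ⟨r, hr, hxr⟩ := hex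
  have hsplit2 : a = β ^ r * x r + ∑ s ∈ (Finset.range k).erase r, β ^ s * x s := by
    rw [hdecomp]
    exact (Finset.add_sum_erase _ _ (Finset.mem_range.2 hr)).symm
  have huM : β ^ r * x r ∈ Malpha β := pow_mul_mem (hxM r) r
  have hvM : (∑ s ∈ (Finset.range k).erase r, β ^ s * x s) ∈ Malpha β :=
    AddSubmonoid.sum_mem _ fun s _ => pow_mul_mem (hxM s) s
  rcases hsp _ _ huM hvM hsplit2 with h1 | h1
  · exact absurd h1 (mul_ne_zero (pow_ne_zero r hβ0) hxr)
  have hvanish : ∀ s, s < k → s ≠ r → x s = 0 := by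
    have e1 : ∑ s ∈ Finset.range k, β ^ s * (if s = r then 0 else x s)
        = ∑ s ∈ (Finset.range k).erase r, β ^ s * x s := by
      rw [← Finset.sum_erase (Finset.range k)
        (by simp : β ^ r * (if r = r then (0 : ℂ) else x r) = 0)]
      exact Finset.sum_congr rfl fun s hs => by rw [if_neg (Finset.ne_of_mem_erase hs)]
    have hxw : ∀ s, ∃ q : ℚ[X], aeval (β ^ k) q = (if s = r then 0 else x s) := by
      intro s
      by_cases hsr : s = r
      · exact ⟨0, by rw [if_pos hsr, map_zero]⟩
      · obtain ⟨q, hq⟩ := Malpha_mem_span (hxM s)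
        exact ⟨q, by rw [if_neg hsr, hq]⟩
    have hyw : ∀ s : ℕ, ∃ q : ℚ[X], aeval (β ^ k) q = (0 : ℂ) := fun s => ⟨0, map_zero _⟩
    have hsums : ∑ s ∈ Finset.range k, β ^ s * (if s = r then 0 else x s)
        = ∑ s ∈ Finset.range k, β ^ s * (0 : ℂ) := by
      rw [e1, h1]
      simp
    have := IND_sem hk hmq hmβ _ _ hxw hyw hsums
    intro s hs hsr
    have h2 := this s hs
    rwa [if_neg hsr] at h2
  have haeq : a = β ^ r * x r := by
    rw [hsplit2, h1, add_zero]
  refine ⟨r, hr, x r, ⟨hxM r, hxr, ?_⟩, haeq⟩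
  intro u v hu hv heq
  have : a = β ^ r * u + β ^ r * v := by rw [haeq, heq]; ring
  rcases hsp _ _ (pow_mul_mem hu r) (pow_mul_mem hv r) this with h2 | h2
  · rcases mul_eq_zero.1 h2 with h3 | h3
    · exact absurd h3 (pow_ne_zero r hβ0)
    · exact Or.inl h3
  · rcases mul_eq_zero.1 h2 with h3 | h3
    · exact absurd h3 (pow_ne_zero r hβ0)
    · exact Or.inr h3

lemma atom_beta_of (hk : 0 < k) (hβ0 : β ≠ 0)
    (hmq : aeval (β ^ k) mq = 0) (hmβ : minpoly ℚ β = expand ℚ k mq)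
    (hred : RedM (β ^ k)) {r : ℕ} (hr : r < k) {b : ℂ} (hb : b ∈ atomsM (β ^ k)) :
    β ^ r * b ∈ atomsM β := by
  obtain ⟨hbM, hb0, hbsp⟩ := hb
  refine ⟨pow_mul_mem hbM r, mul_ne_zero (pow_ne_zero r hβ0) hb0, ?_⟩
  intro u v hu hv huv
  obtain ⟨Eu, hEu⟩ := mem_Malpha_iff_s14.1 hu
  obtain ⟨Ev, hEv⟩ := mem_Malpha_iff_s14.1 hv
  set xu : ℕ → ℂ :=
    fun s => ((Eu.filter (fun n => n % k = s)).map (fun n => (β ^ k) ^ (n / k))).sum with hxud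
  set xv : ℕ → ℂ :=
    fun s => ((Ev.filter (fun n => n % k = s)).map (fun n => (β ^ k) ^ (n / k))).sum with hxvd
  have hud : u = ∑ s ∈ Finset.range k, β ^ s * xu s := by rw [← hEu]; exact beta_decomp hk Eu
  have hvd : v = ∑ s ∈ Finset.range k, β ^ s * xv s := by rw [← hEv]; exact beta_decomp hk Ev
  have hxuM : ∀ s, xu s ∈ Malpha (β ^ k) := fun s => filter_comp_mem Eu s
  have hxvM : ∀ s, xv s ∈ Malpha (β ^ k) := fun s => filter_comp_mem Ev s
  have hxw : ∀ s, ∃ q : ℚ[X], aeval (β ^ k) q = xu s + xv s := by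
    intro s
    obtain ⟨q1, hq1⟩ := Malpha_mem_span (hxuM s)
    obtain ⟨q2, hq2⟩ := Malpha_mem_span (hxvM s)
    exact ⟨q1 + q2, by rw [map_add, hq1, hq2]⟩
  have hyw : ∀ s, ∃ q : ℚ[X], aeval (β ^ k) q = (if s = r then b else 0) := by
    intro s
    by_cases hsr : s = r
    · obtain ⟨q, hq⟩ := Malpha_mem_span hbM
      exact ⟨q, by rw [if_pos hsr, hq]⟩
    · exact ⟨0, by rw [if_neg hsr, map_zero]⟩
  have hsums : ∑ s ∈ Finset.range k, β ^ s * (xu s + xv s)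
      = ∑ s ∈ Finset.range k, β ^ s * (if s = r then b else 0) := by
    have e2 : ∀ s, β ^ s * (if s = r then b else 0) = (if s = r then β ^ s * b else 0) := by
      intro s; split_ifs <;> simp
    rw [Finset.sum_congr rfl (fun s _ => e2 s), Finset.sum_ite_eq' _ r _,
      if_pos (Finset.mem_range.2 hr), huv, hud, hvd, ← Finset.sum_add_distrib]
    exact Finset.sum_congr rfl fun s _ => by ring
  have hcomp := IND_sem hk hmq hmβ _ _ hxw hyw hsums
  have hzero : ∀ s, s < k → s ≠ r → xu s = 0 ∧ xv s = 0 := by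
    intro s hs hsr
    have h2 := hcomp s hs
    rw [if_neg hsr] at h2
    have hnu : -(xu s) ∈ Malpha (β ^ k) := by
      rw [neg_eq_of_add_eq_zero_right h2]; exact hxvM s
    have hu0 := hred _ (hxuM s) hnu
    exact ⟨hu0, by rw [hu0, zero_add] at h2; exact h2⟩
  have hr2 := hcomp r hr
  rw [if_pos rfl] at hr2
  rcases hbsp _ _ (hxuM r) (hxvM r) hr2.symm with h3 | h3
  · left
    rw [hud]
    refine Finset.sum_eq_zero fun s hs => ?_
    by_cases hsr : s = r
    · rw [hsr, h3, mul_zero]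
    · rw [(hzero s (Finset.mem_range.1 hs) hsr).1, mul_zero]
  · right
    rw [hvd]
    refine Finset.sum_eq_zero fun s hs => ?_
    by_cases hsr : s = r
    · rw [hsr, h3, mul_zero]
    · rw [(hzero s (Finset.mem_range.1 hs) hsr).2, mul_zero]

end Beta2

section Strong

variable {k : ℕ} {β : ℂ} {mq : ℚ[X]}

lemma strong_beta_of (hk : 0 < k) (hβ0 : β ≠ 0)
    (hmq : aeval (β ^ k) mq = 0) (hmβ : minpoly ℚ β = expand ℚ k mq)
    (hred : RedM (β ^ k)) {r : ℕ} (hr : r < k) {b : ℂ} (hb : b ∈ strongAtomsM (β ^ k)) :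
    β ^ r * b ∈ strongAtomsM β := by
  obtain ⟨hbAtom, hbs⟩ := hb
  refine ⟨atom_beta_of hk hβ0 hmq hmβ hred hr hbAtom, ?_⟩
  intro n hn s hs hsum
  have hdec : ∀ a ∈ atomsM β, ∃ rb : ℕ × ℂ,
      rb.1 < k ∧ rb.2 ∈ atomsM (β ^ k) ∧ a = β ^ rb.1 * rb.2 := by
    intro a ha
    obtain ⟨r', hr', b', hb', he⟩ := atom_beta_decomp hk hβ0 hmq hmβ ha
    exact ⟨(r', b'), hr', hb', he⟩
  choose! F hF1 hF2 hF3 using hdec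
  set Rf : ℂ → ℕ := fun a => (F a).1 with hRfd
  set Bf : ℂ → ℂ := fun a => (F a).2 with hBfd
  set c : ℕ → ℂ := fun t => ((s.filter (fun a => Rf a = t)).map Bf).sum with hcd
  have hfil : ∀ t, (s.filter (fun a => Rf a = t)).sum = β ^ t * c t := by
    intro t
    have h1 : (s.filter (fun a => Rf a = t)).map (fun a => β ^ t * Bf a)
        = s.filter (fun a => Rf a = t) := by
      conv_rhs => rw [← Multiset.map_id (s.filter (fun a => Rf a = t))]
      refine Multiset.map_congr rfl ?_
      intro a ha
      have hmem := Multiset.mem_filter.1 ha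
      have := hF3 a (hs a hmem.1)
      simp only [id]
      rw [← hmem.2]
      exact this.symm
    rw [← h1, Multiset.sum_map_mul_left]
  have hsum2 : ∑ t ∈ Finset.range k, β ^ t * c t
      = ∑ t ∈ Finset.range k, β ^ t * (if t = r then n • b else 0) := by
    have hgroup := sum_map_filter_range k s id Rf
      (fun a ha => hF1 a (hs a ha))
    simp only [Multiset.map_id] at hgroup
    have e2 : ∀ t, β ^ t * (if t = r then n • b else 0)
        = (if t = r then β ^ t * (n • b) else 0) := by
      intro t; split_ifs <;> simp
    rw [Finset.sum_congr rfl (fun t _ => (hfil t).symm), ← hgroup, hsum,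
      Finset.sum_congr rfl (fun t _ => e2 t), Finset.sum_ite_eq' _ r _,
      if_pos (Finset.mem_range.2 hr), mul_smul_comm]
  have hcM : ∀ t, c t ∈ Malpha (β ^ k) := by
    intro t
    refine Malpha_multiset_sum ?_
    intro y hy
    obtain ⟨a, ha, rfl⟩ := Multiset.mem_map.1 hy
    exact (hF2 a (hs a (Multiset.mem_filter.1 ha).1)).1
  have hxw : ∀ t, ∃ q : ℚ[X], aeval (β ^ k) q = c t := fun t => Malpha_mem_span (hcM t)
  have hyw : ∀ t, ∃ q : ℚ[X], aeval (β ^ k) q = (if t = r then n • b else 0) := by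
    intro t
    by_cases htr : t = r
    · obtain ⟨q, hq⟩ := Malpha_mem_span (AddSubmonoid.nsmul_mem _ hbAtom.1 n)
      exact ⟨q, by rw [if_pos htr, hq]⟩
    · exact ⟨0, by rw [if_neg htr, map_zero]⟩
  have hcomp := IND_sem hk hmq hmβ _ _ hxw hyw hsum2
  have hempty : ∀ t, t < k → t ≠ r → s.filter (fun a => Rf a = t) = 0 := by
    intro t ht htr
    have h2 := hcomp t ht
    rw [if_neg htr] at h2
    have := zero_sum_empty hred (s := (s.filter (fun a => Rf a = t)).map Bf) ?_ h2
    · exact (Multiset.map_eq_zero).1 this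
    · intro y hy
      obtain ⟨a, ha, rfl⟩ := Multiset.mem_map.1 hy
      have hat := hF2 a (hs a (Multiset.mem_filter.1 ha).1)
      exact ⟨hat.1, hat.2.1⟩
  have hall : ∀ a ∈ s, Rf a = r := by
    intro a ha
    by_contra hne
    have h3 : a ∈ s.filter (fun x => Rf x = Rf a) := Multiset.mem_filter.2 ⟨ha, rfl⟩
    rw [hempty (Rf a) (hF1 a (hs a ha)) hne] at h3
    exact absurd h3 (Multiset.notMem_zero a)
  have hfeq : s.filter (fun a => Rf a = r) = s := Multiset.filter_eq_self.2 hall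
  have hrep : s.map Bf = Multiset.replicate n b := by
    have h2 := hcomp r hr
    rw [if_pos rfl] at h2
    refine hbs n hn _ ?_ ?_
    · intro y hy
      obtain ⟨a, ha, rfl⟩ := Multiset.mem_map.1 hy
      exact hF2 a (hs a ha)
    · rw [show (s.map Bf) = (s.filter (fun a => Rf a = r)).map Bf by rw [hfeq]]
      exact h2
  have hfin : s.map (fun a => β ^ r * Bf a) = s := by
    conv_rhs => rw [← Multiset.map_id s]
    refine Multiset.map_congr rfl ?_
    intro a ha
    simp only [id]
    rw [← hall a ha]
    exact (hF3 a (hs a ha)).symm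
  calc s = s.map (fun a => β ^ r * Bf a) := hfin.symm
  _ = (s.map Bf).map (fun x => β ^ r * x) := by rw [Multiset.map_map]; rfl
  _ = Multiset.replicate n (β ^ r * b) := by rw [hrep, Multiset.map_replicate]

end Strong

section Strong2

variable {k : ℕ} {β : ℂ} {mq : ℚ[X]}

lemma strong_beta_decomp (hk : 0 < k) (hβ0 : β ≠ 0)
    (hmq : aeval (β ^ k) mq = 0) (hmβ : minpoly ℚ β = expand ℚ k mq)
    (hred : RedM (β ^ k)) {a : ℂ} (ha : a ∈ strongAtomsM β) :
    ∃ r, r < k ∧ ∃ b ∈ strongAtomsM (β ^ k), a = β ^ r * b := by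
  obtain ⟨haAtom, has⟩ := ha
  obtain ⟨r, hr, b, hb, he⟩ := atom_beta_decomp hk hβ0 hmq hmβ haAtom
  subst he
  refine ⟨r, hr, b, ⟨hb, ?_⟩, rfl⟩
  intro n hn s hs hsum
  set s' := s.map (fun c => β ^ r * c) with hs'd
  have hs'atoms : ∀ y ∈ s', y ∈ atomsM β := by
    intro y hy
    obtain ⟨c, hc, rfl⟩ := Multiset.mem_map.1 hy
    exact atom_beta_of hk hβ0 hmq hmβ hred hr (hs c hc)
  have hsum' : s'.sum = n • (β ^ r * b) := by
    rw [hs'd, Multiset.sum_map_mul_left]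
    simp only [Multiset.map_id']
    rw [hsum, mul_smul_comm]
  have hrep := has n hn s' hs'atoms hsum'
  have hinj : Function.Injective (fun c : ℂ => β ^ r * c) :=
    mul_right_injective₀ (pow_ne_zero r hβ0)
  apply Multiset.map_injective hinj
  show s' = Multiset.map _ (Multiset.replicate n b)
  rw [hrep, Multiset.map_replicate]

end Strong2

section Count

variable {k : ℕ} {β : ℂ} {mq : ℚ[X]}

lemma encard_biUnion_pows (hk : 0 < k) (hβ0 : β ≠ 0)
    (hmq : aeval (β ^ k) mq = 0) (hmβ : minpoly ℚ β = expand ℚ k mq)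
    (T : Set ℂ) (hT : ∀ t ∈ T, t ∈ Malpha (β ^ k) ∧ t ≠ 0) :
    (⋃ j ∈ Finset.range k, (fun b => β ^ j * b) '' T).encard = (k : ℕ∞) * T.encard := by
  suffices h : ∀ K : ℕ, K ≤ k →
      (⋃ j ∈ Finset.range K, (fun b => β ^ j * b) '' T).encard = (K : ℕ∞) * T.encard by
    exact h k le_rfl
  intro K
  induction K with
  | zero => intro _; simp
  | succ K ih =>
    intro hK1
    have hK : K ≤ k := Nat.le_of_succ_le hK1
    have hKlt : K < k := hK1
    rw [Finset.range_add_one, Finset.set_biUnion_insert]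
    have hdisj : Disjoint ((fun b => β ^ K * b) '' T)
        (⋃ j ∈ Finset.range K, (fun b => β ^ j * b) '' T) := by
      rw [Set.disjoint_left]
      rintro x ⟨t, ht, rfl⟩ hx2
      simp only [Set.mem_iUnion, Set.mem_image, exists_prop] at hx2
      obtain ⟨j, hj, t', ht', hee⟩ := hx2
      have hjk : j < K := Finset.mem_range.1 hj
      obtain ⟨hJK, -⟩ := rep_unique hk hmq hmβ (lt_of_lt_of_le hjk hK) hKlt
        (hT t' ht').1 (hT t ht).1 (hT t' ht').2 hee
      omega
    rw [Set.encard_union_eq hdisj, ih hK,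
      (mul_right_injective₀ (pow_ne_zero K hβ0)).encard_image T]
    push_cast
    ring

lemma atoms_beta_eq_biUnion (hk : 0 < k) (hβ0 : β ≠ 0)
    (hmq : aeval (β ^ k) mq = 0) (hmβ : minpoly ℚ β = expand ℚ k mq)
    (hred : RedM (β ^ k)) :
    atomsM β = ⋃ j ∈ Finset.range k, (fun b => β ^ j * b) '' atomsM (β ^ k) := by
  ext a
  simp only [Set.mem_iUnion, Finset.mem_range, Set.mem_image, exists_prop]
  constructor
  · intro ha
    obtain ⟨r, hr, b, hb, he⟩ := atom_beta_decomp hk hβ0 hmq hmβ ha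
    exact ⟨r, hr, b, hb, he.symm⟩
  · rintro ⟨j, hj, b, hb, rfl⟩
    exact atom_beta_of hk hβ0 hmq hmβ hred hj hb

lemma strong_beta_eq_biUnion (hk : 0 < k) (hβ0 : β ≠ 0)
    (hmq : aeval (β ^ k) mq = 0) (hmβ : minpoly ℚ β = expand ℚ k mq)
    (hred : RedM (β ^ k)) :
    strongAtomsM β = ⋃ j ∈ Finset.range k, (fun b => β ^ j * b) '' strongAtomsM (β ^ k) := by
  ext a
  simp only [Set.mem_iUnion, Finset.mem_range, Set.mem_image, exists_prop]
  constructor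
  · intro ha
    obtain ⟨r, hr, b, hb, he⟩ := strong_beta_decomp hk hβ0 hmq hmβ hred ha
    exact ⟨r, hr, b, hb, he.symm⟩
  · rintro ⟨j, hj, b, hb, rfl⟩
    exact strong_beta_of hk hβ0 hmq hmβ hred hj hb

end Count

lemma eisenstein_comp_irreducible (m : Polynomial ℤ) (hmonic : m.Monic)
    (hdeg : 0 < m.natDegree) (p : ℕ) (hp : p.Prime)
    (heis : ∀ i < m.natDegree, (p : ℤ) ∣ m.coeff i)
    (heis0 : ¬ ((p : ℤ) ^ 2 ∣ m.coeff 0)) {k : ℕ} (hk : 0 < k) :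
    Irreducible ((m.map (Int.castRingHom ℚ)).comp (X ^ k)) := by
  have hmonicE : (expand ℤ k m).Monic := hmonic.expand hk
  have hndeg : (expand ℤ k m).natDegree = m.natDegree * k := natDegree_expand k m
  have hpZ : Prime (p : ℤ) := Nat.prime_iff_prime_int.1 hp
  have hirr : Irreducible (expand ℤ k m) := by
    apply Polynomial.irreducible_of_eisenstein_criterion (P := Ideal.span {(p : ℤ)})
    · exact (Ideal.span_singleton_prime (by exact_mod_cast hp.ne_zero)).2 hpZ
    · rw [hmonicE.leadingCoeff]
      intro hmem
      exact hpZ.not_dvd_one (Ideal.mem_span_singleton.1 hmem)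
    · intro n hn
      have hn' : n < m.natDegree * k := by
        rw [← hndeg]
        exact coe_lt_degree.1 hn
      rw [coeff_expand hk]
      split_ifs with hdvd
      · exact Ideal.mem_span_singleton.2 (heis _ ((Nat.div_lt_iff_lt_mul hk).2 hn'))
      · exact Submodule.zero_mem _
    · rw [← natDegree_pos_iff_degree_pos, hndeg]
      exact Nat.mul_pos hdeg hk
    · rw [coeff_expand hk, if_pos (dvd_zero k), Nat.zero_div, Ideal.span_singleton_pow]
      intro hmem
      exact heis0 (Ideal.mem_span_singleton.1 hmem)
    · exact hmonicE.isPrimitive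
  have hmap : Irreducible ((expand ℤ k m).map (Int.castRingHom ℚ)) := by
    rw [← algebraMap_int_eq]
    exact (hmonicE.irreducible_iff_irreducible_map_fraction_map).1 hirr
  have heq : (m.map (Int.castRingHom ℚ)).comp (X ^ k)
      = (expand ℤ k m).map (Int.castRingHom ℚ) := by
    rw [map_expand, expand_eq_comp_X_pow]
  rw [heq]
  exact hmap


theorem stmt_14 (α : ℂ) (hα : IsAlgebraic ℚ α)
    (m : Polynomial ℤ) (hmonic : m.Monic)
    (hm : m.map (Int.castRingHom ℚ) = minpoly ℚ α)
    (p : ℕ) (hp : p.Prime)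
    (heis : ∀ i < m.natDegree, (p : ℤ) ∣ m.coeff i)
    (heis0 : ¬ ((p : ℤ) ^ 2 ∣ m.coeff 0)) :
    ∀ k : ℕ, 0 < k →
      Irreducible ((minpoly ℚ α).comp (X ^ k)) ∧
      ∀ β : ℂ, Polynomial.aeval β ((minpoly ℚ α).comp (X ^ k)) = 0 →
        (atomsM β).encard = (k : ℕ∞) * (atomsM α).encard ∧
        (strongAtomsM β).encard = (k : ℕ∞) * (strongAtomsM α).encard := by
  intro k hk
  have hintα : IsIntegral ℚ α := hα.isIntegral
  have hmqmonic : (minpoly ℚ α).Monic := minpoly.monic hintα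
  have hdegm : 0 < m.natDegree := by
    have h1 : (m.map (Int.castRingHom ℚ)).natDegree = m.natDegree :=
      hmonic.natDegree_map _
    have h2 := minpoly.natDegree_pos hintα
    rw [hm] at h1
    omega
  have hirr : Irreducible ((minpoly ℚ α).comp (X ^ k)) := by
    rw [← hm]
    exact eisenstein_comp_irreducible m hmonic hdegm p hp heis heis0 hk
  refine ⟨hirr, ?_⟩
  intro β hβroot
  have hγroot : aeval (β ^ k) (minpoly ℚ α) = 0 := by
    rwa [aeval_comp, map_pow, aeval_X] at hβroot
  have hintγ : IsIntegral ℚ (β ^ k) :=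
    IsAlgebraic.isIntegral ⟨minpoly ℚ α, minpoly.ne_zero hintα, hγroot⟩
  have hminγ : minpoly ℚ (β ^ k) = minpoly ℚ α :=
    (minpoly.eq_of_irreducible_of_monic (minpoly.irreducible hintα) hγroot hmqmonic).symm
  have hT1 : TransRel α (β ^ k) := transRel_of_minpoly_eq hminγ.symm hintα
  have hT2 : TransRel (β ^ k) α := transRel_of_minpoly_eq hminγ hintγ
  have hmonicE : (expand ℚ k (minpoly ℚ α)).Monic := hmqmonic.expand hk
  have hminβ : minpoly ℚ β = expand ℚ k (minpoly ℚ α) := by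
    refine (minpoly.eq_of_irreducible_of_monic ?_ ?_ hmonicE).symm
    · rwa [expand_eq_comp_X_pow]
    · rwa [expand_eq_comp_X_pow]
  have hm00 : m.coeff 0 ≠ 0 := fun h => heis0 (h ▸ dvd_zero _)
  have hβ0 : β ≠ 0 := by
    intro h0
    have h1 := hγroot
    rw [h0, zero_pow hk.ne', aeval_def, eval₂_at_zero] at h1
    have h2 : (minpoly ℚ α).coeff 0 = 0 := by
      exact (map_eq_zero_iff (algebraMap ℚ ℂ) (algebraMap ℚ ℂ).injective).1 h1
    rw [← hm, coeff_map] at h2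
    exact hm00 (by exact_mod_cast (show ((m.coeff 0 : ℤ) : ℚ) = 0 by simpa using h2))
  have hAtr : (atomsM (β ^ k)).encard = (atomsM α).encard := encard_atoms_eq hT1 hT2
  have hStr : (strongAtomsM (β ^ k)).encard = (strongAtomsM α).encard :=
    encard_strongAtoms_eq hT1 hT2
  by_cases hred : RedM (β ^ k)
  · constructor
    · rw [atoms_beta_eq_biUnion hk hβ0 hγroot hminβ hred,
        encard_biUnion_pows hk hβ0 hγroot hminβ _ (fun t ht => ⟨ht.1, ht.2.1⟩), hAtr]
    · rw [strong_beta_eq_biUnion hk hβ0 hγroot hminβ hred,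
        encard_biUnion_pows hk hβ0 hγroot hminβ _
          (fun t ht => ⟨ht.1.1, ht.1.2.1⟩), hStr]
  · rw [RedM] at hred
    push_neg at hred
    obtain ⟨u, huM, hmuM, hu0⟩ := hred
    have hAγ : atomsM (β ^ k) = ∅ := atoms_empty_of_unit huM hmuM hu0
    have hAβ : atomsM β = ∅ := atoms_empty_of_unit (Malpha_pow_le huM) (Malpha_pow_le hmuM) hu0
    have hAα0 : (atomsM α).encard = 0 := by rw [← hAtr, hAγ, Set.encard_empty]
    have hSβ : strongAtomsM β = ∅ := by
      rw [Set.eq_empty_iff_forall_notMem]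
      intro a ha
      rw [Set.eq_empty_iff_forall_notMem] at hAβ
      exact hAβ a ha.1
    have hSγ : strongAtomsM (β ^ k) = ∅ := by
      rw [Set.eq_empty_iff_forall_notMem]
      intro a ha
      rw [Set.eq_empty_iff_forall_notMem] at hAγ
      exact hAγ a ha.1
    have hSα0 : (strongAtomsM α).encard = 0 := by rw [← hStr, hSγ, Set.encard_empty]
    rw [hAβ, hSβ, hAα0, hSα0, Set.encard_empty]
    simp
end
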